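/- arXiv:1605.05649 — 4 statements merged into one kernel-verified Lean document; each statement's English description precedes it below -/
import Mathlib

section
/- If A = U|A| is a polar decomposition of an n×n complex matrix A and there exist k orthonormal vectors u_1,...,u_k in ℂ^n such that |A|u_i = s_i(A)u_i for all 1 ≤ i ≤ k and ∑_{i=1}^k ⟨u_i, U*Bu_i⟩ = 0, then ‖A + λB‖_(k) ≥ ‖A‖_(k) for all λ ∈ ℂ. -/
open Matrix BigOperators
open scoped ComplexOrder

noncomputable def svalues {m p : ℕ} (A : Matrix (Fin m) (Fin p) ℂ) : Fin p → ℝ :=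
  fun i => Real.sqrt
    (((Matrix.isHermitian_conjTranspose_mul_self A).eigenvalues ∘
      Tuple.sort (Matrix.isHermitian_conjTranspose_mul_self A).eigenvalues) i.rev)

noncomputable def kyFan {n : ℕ} (k : ℕ) (A : Matrix (Fin n) (Fin n) ℂ) : ℝ :=
  ∑ i ∈ Finset.univ.filter (fun i : Fin n => (i : ℕ) < k), svalues A i

def ONSys {n k : ℕ} (u : Fin k → Fin n → ℂ) : Prop :=
  ∀ i j, star (u i) ⬝ᵥ u j = if i = j then 1 else 0

noncomputable def eigDesc {n : ℕ} (A : Matrix (Fin n) (Fin n) ℂ) (hA : A.IsHermitian) :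
    Fin n → ℝ :=
  (hA.eigenvalues ∘ Tuple.sort hA.eigenvalues) ∘ Fin.rev

/-!
Ky Fan's maximum principle: for orthonormal `v₁, …, v_k`, `w₁, …, w_k` and any `X`,
`Re ∑ ⟨vᵢ, X wᵢ⟩ ≤ s₁(X) + ⋯ + s_k(X)`. To see it, take an orthonormal eigenbasis `b_j` of `XᴴX`
ordered so that `‖X b_j‖ = s_j(X)` decreases; the `X b_j` are orthogonal. Expanding `wᵢ` in
this basis and using `|αβ| ≤ (|α|² + |β|²)/2` bounds the left side by `∑ s_j c_j`, where
`c_j = (p_j + q_j)/2`, `p_j` is the squared length of the projection of the normalised `X b_j`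
onto `span v` and `q_j` that of `b_j` onto `span w`. Bessel's inequality gives `c_j ≤ 1` and
`∑ c_j ≤ k`, and for decreasing `s_j ≥ 0` such weights give at most `s₁ + ⋯ + s_k`.

Applied to `X = A + λB`, `vᵢ = U uᵢ`, `wᵢ = uᵢ`, the left side is
`∑ ⟨uᵢ, |A| uᵢ⟩ + λ ∑ ⟨uᵢ, U*B uᵢ⟩ = s₁(A) + ⋯ + s_k(A)`.
-/

open scoped InnerProductSpace

/-- The bathtub principle. -/
theorem Finset.sum_mul_le_sum_of_threshold {ι : Type*} [Fintype ι] [DecidableEq ι]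
    (S : Finset ι) (t c : ι → ℝ) {τ : ℝ} (hτ : 0 ≤ τ)
    (hS : ∀ i ∈ S, τ ≤ t i) (hSc : ∀ i ∈ Sᶜ, t i ≤ τ)
    (hc0 : ∀ i, 0 ≤ c i) (hc1 : ∀ i, c i ≤ 1) (hcs : ∑ i, c i ≤ S.card) :
    ∑ i, t i * c i ≤ ∑ i ∈ S, t i := by
  have hin : ∀ i ∈ S, t i * c i ≤ t i - τ * (1 - c i) := fun i hi => by
    nlinarith [hS i hi, hc1 i]
  have hout : ∀ i ∈ Sᶜ, t i * c i ≤ τ * c i := fun i hi =>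
    mul_le_mul_of_nonneg_right (hSc i hi) (hc0 i)
  calc ∑ i, t i * c i = ∑ i ∈ S, t i * c i + ∑ i ∈ Sᶜ, t i * c i :=
        (Finset.sum_add_sum_compl S _).symm
    _ ≤ ∑ i ∈ S, (t i - τ * (1 - c i)) + ∑ i ∈ Sᶜ, τ * c i :=
        add_le_add (Finset.sum_le_sum hin) (Finset.sum_le_sum hout)
    _ = ∑ i ∈ S, t i - τ * (S.card - ∑ i, c i) := by
        rw [← Finset.sum_add_sum_compl S c]
        simp only [Finset.sum_sub_distrib, ← Finset.mul_sum, Finset.sum_const, nsmul_eq_mul,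
          mul_one]
        ring
    _ ≤ ∑ i ∈ S, t i := sub_le_self _ (mul_nonneg hτ (sub_nonneg.2 hcs))

theorem Fin.sum_mul_le_sum_filter_lt_of_antitone {n : ℕ} (k : ℕ) {t c : Fin n → ℝ}
    (ht : Antitone t) (ht0 : ∀ i, 0 ≤ t i) (hc0 : ∀ i, 0 ≤ c i) (hc1 : ∀ i, c i ≤ 1)
    (hcs : ∑ i, c i ≤ k) :
    ∑ i, t i * c i ≤ ∑ i ∈ Finset.univ.filter (fun i : Fin n => (i : ℕ) < k), t i := by
  by_cases hkn : k < n
  · have hcard : (Finset.univ.filter (fun i : Fin n => (i : ℕ) < k)).card = k := by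
      rw [Fin.card_filter_val_lt, min_eq_right hkn.le]
    refine Finset.sum_mul_le_sum_of_threshold _ t c (ht0 ⟨k, hkn⟩) (fun i hi => ht ?_)
      (fun i hi => ht ?_) hc0 hc1 (by rwa [hcard])
    · exact Fin.le_def.2 (Finset.mem_filter.1 hi).2.le
    · simpa [Fin.le_def] using hi
  · rw [Finset.filter_true_of_mem fun i _ => by omega]
    exact Finset.sum_le_sum fun i _ => mul_le_of_le_one_right (ht0 i) (hc1 i)

theorem norm_sum_mul_le_add_sum_sq_div_two {ι R : Type*} [SeminormedRing R] (s : Finset ι)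
    (f g : ι → R) :
    ‖∑ i ∈ s, f i * g i‖ ≤ (∑ i ∈ s, ‖f i‖ ^ 2 + ∑ i ∈ s, ‖g i‖ ^ 2) / 2 := by
  rw [← Finset.sum_add_distrib, Finset.sum_div]
  refine (norm_sum_le _ _).trans (Finset.sum_le_sum fun i _ => ?_)
  nlinarith [norm_mul_le (f i) (g i), sq_nonneg (‖f i‖ - ‖g i‖)]

section InnerProductSpace

variable {𝕜 E F : Type*} [RCLike 𝕜] [NormedAddCommGroup E] [InnerProductSpace 𝕜 E]
  [NormedAddCommGroup F] [InnerProductSpace 𝕜 F]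

theorem sum_norm_inner_sq_le_of_pairwise_inner_eq_zero {ι : Type*} [Fintype ι] {x : ι → E}
    (hx : Pairwise fun i j => ⟪x i, x j⟫_𝕜 = 0) (hx1 : ∀ j, x j = 0 ∨ ‖x j‖ = 1) (y : E) :
    ∑ j, ‖⟪x j, y⟫_𝕜‖ ^ 2 ≤ ‖y‖ ^ 2 := by
  classical
  have hon : Orthonormal 𝕜 fun j : {j // x j ≠ 0} => x j :=
    ⟨fun j => (hx1 j).resolve_left j.2, fun i j hij => hx (Subtype.coe_injective.ne hij)⟩
  calc ∑ j, ‖⟪x j, y⟫_𝕜‖ ^ 2 = ∑ j : {j // x j ≠ 0}, ‖⟪x j, y⟫_𝕜‖ ^ 2 := by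
        rw [← Finset.sum_filter_of_ne (p := fun j => x j ≠ 0)]
        · exact Finset.sum_subtype _ (by simp) _
        · intro j _ hj hxj
          simp [hxj] at hj
    _ ≤ ‖y‖ ^ 2 := hon.sum_inner_products_le y

theorem sum_inner_apply_eq_sum_mul {ι κ : Type*} [Fintype ι] [Fintype κ] (T : E →ₗ[𝕜] F)
    (b : OrthonormalBasis ι 𝕜 E) (s : ι → 𝕜) (x : ι → F) (hT : ∀ j, T (b j) = s j • x j)
    (v : κ → F) (w : κ → E) :
    ∑ i, ⟪v i, T (w i)⟫_𝕜 = ∑ j, s j * ∑ i, ⟪v i, x j⟫_𝕜 * ⟪b j, w i⟫_𝕜 := by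
  have hw : ∀ i, T (w i) = ∑ j, ⟪b j, w i⟫_𝕜 • s j • x j := fun i => by
    conv_lhs => rw [← b.sum_repr' (w i)]
    simp only [map_sum, map_smul, hT]
  simp only [hw, inner_sum, inner_smul_right, Finset.mul_sum]
  rw [Finset.sum_comm]
  exact Finset.sum_congr rfl fun j _ => Finset.sum_congr rfl fun i _ => by ring

theorem Orthonormal.sum_sum_norm_inner_sq_le_card {ι κ : Type*} [Fintype ι] [Fintype κ]
    {x : ι → E} (hx : ∀ y, ∑ j, ‖⟪x j, y⟫_𝕜‖ ^ 2 ≤ ‖y‖ ^ 2) {v : κ → E} (hv : Orthonormal 𝕜 v) :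
    ∑ j, ∑ i, ‖⟪x j, v i⟫_𝕜‖ ^ 2 ≤ Fintype.card κ := by
  calc ∑ j, ∑ i, ‖⟪x j, v i⟫_𝕜‖ ^ 2 = ∑ i, ∑ j, ‖⟪x j, v i⟫_𝕜‖ ^ 2 := Finset.sum_comm
    _ ≤ ∑ i, ‖v i‖ ^ 2 := Finset.sum_le_sum fun i _ => hx (v i)
    _ = Fintype.card κ := by simp [hv.1]

theorem re_sum_inner_apply_le_sum_filter_lt {n k : ℕ} (T : E →ₗ[𝕜] F)
    (b : OrthonormalBasis (Fin n) 𝕜 E) (hTb : Pairwise fun i j => ⟪T (b i), T (b j)⟫_𝕜 = 0)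
    (hTb_anti : Antitone fun j => ‖T (b j)‖) {v : Fin k → F} {w : Fin k → E}
    (hv : Orthonormal 𝕜 v) (hw : Orthonormal 𝕜 w) :
    RCLike.re (∑ i, ⟪v i, T (w i)⟫_𝕜) ≤
      ∑ j ∈ Finset.univ.filter (fun j : Fin n => (j : ℕ) < k), ‖T (b j)‖ := by
  set s : Fin n → ℝ := fun j => ‖T (b j)‖
  -- `x j = 0` when `T (b j) = 0`, as `0⁻¹ = 0`.
  set x : Fin n → F := fun j => (s j : 𝕜)⁻¹ • T (b j)
  have hT : ∀ j, T (b j) = (s j : 𝕜) • x j := fun j => by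
    rcases eq_or_ne (T (b j)) 0 with h | h
    · simp [x, h]
    · rw [smul_smul, mul_inv_cancel₀ (by simpa [s] using h), one_smul]
  have hx : Pairwise fun i j => ⟪x i, x j⟫_𝕜 = 0 := fun i j hij => by
    simp [x, inner_smul_left, inner_smul_right, hTb hij]
  have hx1 : ∀ j, x j = 0 ∨ ‖x j‖ = 1 := fun j => by
    rcases eq_or_ne (T (b j)) 0 with h | h
    · simp [x, h]
    · exact Or.inr (norm_smul_inv_norm h)
  set p : Fin n → ℝ := fun j => ∑ i, ‖⟪x j, v i⟫_𝕜‖ ^ 2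
  set q : Fin n → ℝ := fun j => ∑ i, ‖⟪b j, w i⟫_𝕜‖ ^ 2
  have hp1 : ∀ j, p j ≤ 1 := fun j => by
    have hxj : ‖x j‖ ≤ 1 := by rcases hx1 j with h | h <;> simp [h]
    calc p j = ∑ i, ‖⟪v i, x j⟫_𝕜‖ ^ 2 := by simp only [p, norm_inner_symm (x j)]
      _ ≤ ‖x j‖ ^ 2 := hv.sum_inner_products_le _
      _ ≤ 1 := pow_le_one₀ (norm_nonneg _) hxj
  have hq1 : ∀ j, q j ≤ 1 := fun j => by
    have := hw.sum_inner_products_le (s := Finset.univ) (b j)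
    simpa only [norm_inner_symm (w _), b.orthonormal.1 j, one_pow] using this
  have hpk : ∑ j, p j ≤ k := by
    simpa using hv.sum_sum_norm_inner_sq_le_card
      (sum_norm_inner_sq_le_of_pairwise_inner_eq_zero hx hx1)
  have hqk : ∑ j, q j ≤ k := by
    simpa using hw.sum_sum_norm_inner_sq_le_card fun y => b.orthonormal.sum_inner_products_le y
  have hz : ∀ j, ‖∑ i, ⟪v i, x j⟫_𝕜 * ⟪b j, w i⟫_𝕜‖ ≤ (p j + q j) / 2 := fun j => by
    simpa only [norm_inner_symm (v _)] using
      norm_sum_mul_le_add_sum_sq_div_two Finset.univ (fun i => ⟪v i, x j⟫_𝕜) _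
  calc RCLike.re (∑ i, ⟪v i, T (w i)⟫_𝕜)
      = ∑ j, s j * RCLike.re (∑ i, ⟪v i, x j⟫_𝕜 * ⟪b j, w i⟫_𝕜) := by
        simp [sum_inner_apply_eq_sum_mul T b _ x hT]
    _ ≤ ∑ j, s j * ((p j + q j) / 2) := Finset.sum_le_sum fun j _ =>
        mul_le_mul_of_nonneg_left ((RCLike.re_le_norm _).trans (hz j)) (norm_nonneg _)
    _ ≤ _ := Fin.sum_mul_le_sum_filter_lt_of_antitone k hTb_anti (fun j => norm_nonneg _)
        (fun j => by positivity) (fun j => by linarith [hp1 j, hq1 j])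
        (by rw [← Finset.sum_div, Finset.sum_add_distrib]; linarith)

end InnerProductSpace

theorem Matrix.star_mulVec_dotProduct_mulVec {m n p α : Type*} [Fintype m] [Fintype n]
    [Fintype p] [CommSemiring α] [StarRing α] (U : Matrix m n α) (M : Matrix m p α)
    (x : n → α) (y : p → α) :
    star (U *ᵥ x) ⬝ᵥ (M *ᵥ y) = star x ⬝ᵥ ((Uᴴ * M) *ᵥ y) := by
  rw [Matrix.star_mulVec, ← Matrix.mulVec_mulVec, ← Matrix.dotProduct_mulVec]

theorem EuclideanSpace.inner_toLp_toLp_eq_star_dotProduct {𝕜 ι : Type*} [RCLike 𝕜] [Fintype ι]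
    (x y : ι → 𝕜) : ⟪WithLp.toLp 2 x, WithLp.toLp 2 y⟫_𝕜 = star x ⬝ᵥ y := by
  rw [EuclideanSpace.inner_toLp_toLp, dotProduct_comm]

theorem Matrix.inner_mulVec_eigenvectorBasis {𝕜 m n : Type*} [RCLike 𝕜] [Fintype m] [Fintype n]
    [DecidableEq n] (X : Matrix m n 𝕜) (i j : n) :
    ⟪WithLp.toLp 2 (X *ᵥ (isHermitian_conjTranspose_mul_self X).eigenvectorBasis i),
      WithLp.toLp 2 (X *ᵥ (isHermitian_conjTranspose_mul_self X).eigenvectorBasis j)⟫_𝕜 =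
      if i = j then ((isHermitian_conjTranspose_mul_self X).eigenvalues i : 𝕜) else 0 := by
  set H := isHermitian_conjTranspose_mul_self X
  rw [EuclideanSpace.inner_toLp_toLp_eq_star_dotProduct, star_mulVec_dotProduct_mulVec,
    H.mulVec_eigenvectorBasis, dotProduct_smul, ← EuclideanSpace.inner_toLp_toLp_eq_star_dotProduct]
  simp only [WithLp.toLp_ofLp, orthonormal_iff_ite.1 H.eigenvectorBasis.orthonormal]
  split_ifs with h <;> simp [h, RCLike.real_smul_eq_coe_mul]

theorem ONSys.orthonormal {n k : ℕ} {u : Fin k → Fin n → ℂ} (hu : ONSys u) :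
    Orthonormal ℂ fun i => WithLp.toLp 2 (u i) := by
  rw [orthonormal_iff_ite]
  intro i j
  rw [EuclideanSpace.inner_toLp_toLp_eq_star_dotProduct, hu]

theorem re_sum_star_dotProduct_mulVec_le_kyFan {n k : ℕ} (X : Matrix (Fin n) (Fin n) ℂ)
    {v w : Fin k → Fin n → ℂ} (hv : ONSys v) (hw : ONSys w) :
    (∑ i, star (v i) ⬝ᵥ (X *ᵥ w i)).re ≤ kyFan k X := by
  set H := isHermitian_conjTranspose_mul_self X
  set b := H.eigenvectorBasis.reindex (Fin.revPerm.trans (Tuple.sort H.eigenvalues)).symm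
  have hb : ∀ j, b j = H.eigenvectorBasis (Tuple.sort H.eigenvalues j.rev) := fun j => by
    simp [b]
  have hinner : ∀ i j, ⟪toLpLin 2 2 X (b i), toLpLin 2 2 X (b j)⟫_ℂ =
      if i = j then ((svalues X i ^ 2 : ℝ) : ℂ) else 0 := fun i j => by
    simp only [toLpLin_apply, hb, inner_mulVec_eigenvectorBasis, EmbeddingLike.apply_eq_iff_eq,
      Fin.rev_inj]
    split_ifs with h
    · rw [svalues, Function.comp_apply,
        Real.sq_sqrt ((posSemidef_conjTranspose_mul_self X).eigenvalues_nonneg _)]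
      rfl
    · rfl
  have hnorm : ∀ j, ‖toLpLin 2 2 X (b j)‖ = svalues X j := fun j => by
    rw [norm_eq_sqrt_re_inner (𝕜 := ℂ), hinner, if_pos rfl, RCLike.re_to_complex,
      Complex.ofReal_re]
    exact Real.sqrt_sq (Real.sqrt_nonneg _)
  have hsv_anti : Antitone (svalues X) := fun i j hij =>
    Real.sqrt_le_sqrt (Tuple.monotone_sort _ (Fin.rev_le_rev.mpr hij))
  have key := re_sum_inner_apply_le_sum_filter_lt (toLpLin 2 2 X) b
    (fun i j hij => by simp [hinner, hij]) (by simpa only [hnorm] using hsv_anti)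
    hv.orthonormal hw.orthonormal
  rw [kyFan]
  simpa [toLpLin_toLp, EuclideanSpace.inner_toLp_toLp_eq_star_dotProduct, hnorm] using key

theorem kyFan_eq_sum_castLE {n k : ℕ} (hk : k ≤ n) (X : Matrix (Fin n) (Fin n) ℂ) :
    kyFan k X = ∑ i : Fin k, svalues X (Fin.castLE hk i) := by
  have hfilter : Finset.univ.filter (fun i : Fin n => (i : ℕ) < k) =
      Finset.univ.map (Fin.castLEEmb hk) := by
    ext i
    simp only [Finset.mem_filter, Finset.mem_univ, true_and, Finset.mem_map, Fin.castLEEmb_apply]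
    exact ⟨fun h => ⟨⟨i, h⟩, rfl⟩, by rintro ⟨j, -, rfl⟩; exact j.isLt⟩
  rw [kyFan, hfilter, Finset.sum_map]
  rfl

theorem stmt0_general {n k : ℕ} (hk : k ≤ n)
    (A B U P : Matrix (Fin n) (Fin n) ℂ)
    (hU : U ∈ Matrix.unitaryGroup (Fin n) ℂ)
    (hA : A = U * P)
    (u : Fin k → Fin n → ℂ) (hon : ONSys u)
    (heig : ∀ i : Fin k, P *ᵥ u i = (svalues A (Fin.castLE hk i) : ℂ) • u i)
    (hsum : ∑ i, star (u i) ⬝ᵥ ((Uᴴ * B) *ᵥ u i) = 0) :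
    ∀ c : ℂ, kyFan k A ≤ kyFan k (A + c • B) := by
  intro c
  have hUU : Uᴴ * U = 1 := hU.1
  have hUu : ONSys fun i => U *ᵥ u i := fun i j => by
    rw [star_mulVec_dotProduct_mulVec, hUU, one_mulVec, hon]
  have hdiag : ∀ i, star (U *ᵥ u i) ⬝ᵥ (A *ᵥ u i) = svalues A (Fin.castLE hk i) := fun i => by
    have hUA : Uᴴ * A = P := by rw [hA, ← Matrix.mul_assoc, hUU, Matrix.one_mul]
    rw [star_mulVec_dotProduct_mulVec, hUA, heig,
      dotProduct_smul, hon, if_pos rfl, smul_eq_mul, mul_one]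
  calc kyFan k A = (∑ i, star (U *ᵥ u i) ⬝ᵥ ((A + c • B) *ᵥ u i)).re := by
        simp only [add_mulVec, smul_mulVec, dotProduct_add, dotProduct_smul, smul_eq_mul,
          Finset.sum_add_distrib, ← Finset.mul_sum, star_mulVec_dotProduct_mulVec U B, hsum,
          hdiag, mul_zero, add_zero, Complex.re_sum, Complex.ofReal_re, kyFan_eq_sum_castLE hk]
    _ ≤ kyFan k (A + c • B) := re_sum_star_dotProduct_mulVec_le_kyFan _ hUu hon

theorem stmt0 {n k : ℕ} (hk : k ≤ n)
    (A B U P : Matrix (Fin n) (Fin n) ℂ)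
    (hU : U ∈ Matrix.unitaryGroup (Fin n) ℂ)
    (hP : P.PosSemidef) (hP2 : P * P = Aᴴ * A) (hA : A = U * P)
    (u : Fin k → Fin n → ℂ) (hon : ONSys u)
    (heig : ∀ i : Fin k, P *ᵥ u i = (svalues A (Fin.castLE hk i) : ℂ) • u i)
    (hsum : ∑ i, star (u i) ⬝ᵥ ((Uᴴ * B) *ᵥ u i) = 0) :
    ∀ c : ℂ, kyFan k A ≤ kyFan k (A + c • B) :=
  stmt0_general hk A B U P hU hA u hon heig hsum
end

section
/- Let A be positive semidefinite with eigenvalues λ_1(A) ≥ ... ≥ λ_n(A) ≥ 0 and λ_k(A) > 0, and let g(·) = ‖·‖_(k) be the Ky Fan k-norm. Then for every X ∈ M_n(ℂ), g'_+(A,X) = max ∑_{i=1}^k Re⟨u_i, Xu_i⟩, the maximum taken over orthonormal u_1,...,u_k with Au_i = λ_i(A)u_i for all i. -/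
open Matrix BigOperators
open scoped ComplexOrder

/-!
For orthonormal `k`-frames `U, V` (columns `u i`, `v i`), `‖M‖_(k)` is the maximum of
`Re tr (Uᴴ M V)`: expanding `U` and `V` in singular frames of `M` turns the bound into a
rearrangement inequality for weights `0 ≤ t_j ≤ 1` with `∑ t_j = k`. So `t ↦ ‖A + t X‖_(k)`
is a maximum of affine functions over a compact set, and Danskin's argument identifies its
right derivative at `0` with the maximum of `Re tr (Uᴴ X V)` over the pairs maximising
`Re tr (Uᴴ A V)`. For `A ⪰ 0` with `λ_k(A) > 0`, the equality case of the rearrangement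
inequality forces `U = V`, with a span that contains every eigenvector for eigenvalues above
`λ_k` and lies in the sum of the eigenspaces for eigenvalues `≥ λ_k`. Such a span has an
orthonormal basis of eigenvectors for `λ_1, …, λ_k`, and `Re tr (Uᴴ X U)` depends only on the
span of `U`.
-/

namespace KyFan

open Filter Topology
open scoped InnerProductSpace ComplexConjugate
open WithLp (toLp)

variable {n k : ℕ}

section Rearrangement

open Finset

noncomputable def topSum (k : ℕ) (σ : Fin n → ℝ) : ℝ :=
  ∑ j ∈ univ.filter (fun j : Fin n => (j : ℕ) < k), σ j

lemma filter_val_lt_eq_map_castLEEmb (hk : k ≤ n) :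
    univ.filter (fun j : Fin n => (j : ℕ) < k) = univ.map (Fin.castLEEmb hk) := by
  ext j
  simpa using ⟨fun h => ⟨⟨j, h⟩, rfl⟩, by rintro ⟨i, rfl⟩; exact i.2⟩

lemma topSum_eq_sum_castLE (hk : k ≤ n) (σ : Fin n → ℝ) :
    topSum k σ = ∑ i : Fin k, σ (Fin.castLE hk i) := by
  rw [topSum, filter_val_lt_eq_map_castLEEmb hk, sum_map]
  rfl

variable (k : ℕ) (σ t r : Fin n → ℝ) (c : ℝ)

def slack (j : Fin n) : ℝ :=
  σ j * (t j - r j) + if (j : ℕ) < k then (σ j - c) * (1 - t j) else (c - σ j) * t j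

variable {k σ t r c}

-- `c` only enters through terms that cancel because `∑ j, t j = k`.
lemma topSum_sub_sum_mul_eq_sum_slack (hk : k ≤ n) (htk : ∑ j, t j = k) :
    topSum k σ - ∑ j, σ j * r j = ∑ j, slack k σ t r c j := by
  have hcard : topSum k (fun _ : Fin n => c) = k * c := by simp [topSum_eq_sum_castLE hk]
  have hsplit (f : Fin n → ℝ) :=
    (sum_filter_add_sum_filter_not univ (fun j : Fin n => (j : ℕ) < k) f).symm
  simp only [slack, sum_add_distrib, sum_ite, mul_sub, sub_mul, mul_one, sum_sub_distrib,
    ← mul_sum]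
  rw [hsplit t] at htk
  rw [hsplit (fun j => σ j * r j), hsplit (fun j => σ j * t j)]
  simp only [topSum] at hcard ⊢
  linear_combination (-c) * htk + hcard

lemma slack_nonneg (hσ : ∀ j, 0 ≤ σ j) (hc : ∀ j : Fin n, (j : ℕ) < k → c ≤ σ j)
    (hc' : ∀ j : Fin n, k ≤ (j : ℕ) → σ j ≤ c) (ht0 : ∀ j, 0 ≤ t j)
    (ht1 : ∀ j, t j ≤ 1) (hrt : ∀ j, r j ≤ t j) (j : Fin n) : 0 ≤ slack k σ t r c j := by
  have h := mul_nonneg (hσ j) (sub_nonneg.2 (hrt j))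
  unfold slack
  split_ifs with hj
  · nlinarith [hc j hj, ht1 j]
  · nlinarith [hc' j (not_lt.1 hj), ht0 j]

lemma exists_threshold (hσ : Antitone σ) (hk : k ≤ n) :
    ∃ c, (∀ j : Fin n, (j : ℕ) < k → c ≤ σ j) ∧
      (∀ j : Fin n, k ≤ (j : ℕ) → σ j ≤ c) := by
  rcases Nat.eq_zero_or_pos k with rfl | hk0
  · exact ⟨⨆ j, σ j, by simp, fun j _ => le_ciSup (Set.finite_range σ).bddAbove j⟩
  · refine ⟨σ ⟨k - 1, by omega⟩, fun j hj => hσ ?_, fun j hj => hσ ?_⟩ <;>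
      simp only [Fin.le_def] <;> omega

theorem sum_mul_le_topSum (hk : k ≤ n) (hσ : ∀ j, 0 ≤ σ j) (hσa : Antitone σ)
    (ht0 : ∀ j, 0 ≤ t j) (ht1 : ∀ j, t j ≤ 1) (htk : ∑ j, t j = k)
    (hrt : ∀ j, r j ≤ t j) : ∑ j, σ j * r j ≤ topSum k σ := by
  obtain ⟨c, hc, hc'⟩ := exists_threshold hσa hk
  have := topSum_sub_sum_mul_eq_sum_slack (σ := σ) (r := r) (c := c) hk htk
  have := sum_nonneg fun j (_ : j ∈ univ) => slack_nonneg hσ hc hc' ht0 ht1 hrt j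
  linarith

theorem eq_of_sum_mul_eq_topSum (hk : k ≤ n) (hσ : ∀ j, 0 ≤ σ j)
    (hc : ∀ j : Fin n, (j : ℕ) < k → c ≤ σ j) (hc' : ∀ j : Fin n, k ≤ (j : ℕ) → σ j ≤ c)
    (ht0 : ∀ j, 0 ≤ t j) (ht1 : ∀ j, t j ≤ 1) (htk : ∑ j, t j = k)
    (hrt : ∀ j, r j ≤ t j) (heq : ∑ j, σ j * r j = topSum k σ) (j : Fin n) :
    (0 < σ j → r j = t j) ∧ (c < σ j → t j = 1) ∧ (σ j < c → t j = 0) := by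
  have hslack : slack k σ t r c j = 0 := by
    have hsum := topSum_sub_sum_mul_eq_sum_slack (σ := σ) (r := r) (c := c) hk htk
    rw [heq, sub_self, eq_comm, sum_eq_zero_iff_of_nonneg fun j _ =>
      slack_nonneg hσ hc hc' ht0 ht1 hrt j] at hsum
    exact hsum j (mem_univ j)
  have h := mul_nonneg (hσ j) (sub_nonneg.2 (hrt j))
  unfold slack at hslack
  split_ifs at hslack with hj
  · have h' := mul_nonneg (sub_nonneg.2 (hc j hj)) (sub_nonneg.2 (ht1 j))
    refine ⟨fun hpos => ?_, fun hlt => ?_, fun hlt => absurd (hc j hj) (not_le.2 hlt)⟩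
    · nlinarith
    · nlinarith
  · have h' := mul_nonneg (sub_nonneg.2 (hc' j (not_lt.1 hj))) (ht0 j)
    refine ⟨fun hpos => ?_, fun hlt => absurd (hc' j (not_lt.1 hj)) (not_le.2 hlt),
      fun hlt => ?_⟩
    · nlinarith
    · nlinarith

end Rearrangement

-- `Re tr (Uᴴ M V)` for the `n × k` matrices `U`, `V` with columns `u i`, `v i`.
noncomputable def reTrace (M : Matrix (Fin n) (Fin n) ℂ) (u v : Fin k → Fin n → ℂ) : ℝ :=
  ∑ i, (star (u i) ⬝ᵥ (M *ᵥ v i)).re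

lemma star_dotProduct_eq_inner (x y : Fin n → ℂ) :
    star x ⬝ᵥ y = ⟪toLp 2 x, toLp 2 y⟫_ℂ := by
  rw [EuclideanSpace.inner_toLp_toLp, dotProduct_comm]

lemma onSys_iff_orthonormal {u : Fin k → Fin n → ℂ} :
    ONSys u ↔ Orthonormal ℂ (fun i => toLp 2 (u i)) := by
  simp only [orthonormal_iff_ite, ← star_dotProduct_eq_inner, ONSys]

lemma re_inner_le_half_add {E : Type*} [NormedAddCommGroup E] [InnerProductSpace ℂ E]
    (a b : E) :
    (⟪a, b⟫_ℂ).re ≤ (‖a‖ ^ 2 + ‖b‖ ^ 2) / 2 := by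
  have := norm_sub_sq (𝕜 := ℂ) a b
  rw [RCLike.re_to_complex] at this
  nlinarith [sq_nonneg ‖a - b‖]

section Coordinates

noncomputable def coords (e : OrthonormalBasis (Fin n) ℂ (EuclideanSpace ℂ (Fin n)))
    (u : Fin k → Fin n → ℂ) (j : Fin n) : EuclideanSpace ℂ (Fin k) :=
  toLp 2 fun i => ⟪e j, toLp 2 (u i)⟫_ℂ

variable {u : Fin k → Fin n → ℂ} (e : OrthonormalBasis (Fin n) ℂ (EuclideanSpace ℂ (Fin n)))

lemma norm_coords_sq (j : Fin n) :
    ‖coords e u j‖ ^ 2 = ∑ i, ‖⟪e j, toLp 2 (u i)⟫_ℂ‖ ^ 2 :=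
  EuclideanSpace.norm_sq_eq _

lemma norm_coords_sq_le_one (hu : ONSys u) (j : Fin n) : ‖coords e u j‖ ^ 2 ≤ 1 := by
  have := (onSys_iff_orthonormal.1 hu).sum_inner_products_le (e j) (s := Finset.univ)
  simp_rw [norm_coords_sq, ← inner_conj_symm (e j), RCLike.norm_conj]
  simpa using this

lemma sum_norm_coords_sq (hu : ONSys u) : ∑ j, ‖coords e u j‖ ^ 2 = k := by
  simp_rw [norm_coords_sq, Finset.sum_comm (γ := Fin n), e.sum_sq_norm_inner_right,
    (onSys_iff_orthonormal.1 hu).norm_eq_one]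
  simp

lemma half_add_norm_coords_sq_le_one {u v : Fin k → Fin n → ℂ} (hu : ONSys u) (hv : ONSys v)
    (w z : OrthonormalBasis (Fin n) ℂ (EuclideanSpace ℂ (Fin n))) (j : Fin n) :
    (‖coords w u j‖ ^ 2 + ‖coords z v j‖ ^ 2) / 2 ≤ 1 := by
  linarith [norm_coords_sq_le_one w hu j, norm_coords_sq_le_one z hv j]

lemma sum_half_add_norm_coords_sq {u v : Fin k → Fin n → ℂ} (hu : ONSys u) (hv : ONSys v)
    (w z : OrthonormalBasis (Fin n) ℂ (EuclideanSpace ℂ (Fin n))) :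
    ∑ j, (‖coords w u j‖ ^ 2 + ‖coords z v j‖ ^ 2) / 2 = (k : ℝ) := by
  rw [← Finset.sum_div, Finset.sum_add_distrib, sum_norm_coords_sq w hu, sum_norm_coords_sq z hv]
  ring

end Coordinates

def onPairs (k n : ℕ) : Set ((Fin k → Fin n → ℂ) × (Fin k → Fin n → ℂ)) :=
  {p | ONSys p.1 ∧ ONSys p.2}

lemma onSys_castLE (hk : k ≤ n) (e : OrthonormalBasis (Fin n) ℂ (EuclideanSpace ℂ (Fin n))) :
    ONSys fun i : Fin k => ⇑(e (Fin.castLE hk i)) :=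
  onSys_iff_orthonormal.2 (e.orthonormal.comp _ (Fin.castLE_injective hk))

lemma reTrace_eq_topSum (hk : k ≤ n) {M : Matrix (Fin n) (Fin n) ℂ} {σ : Fin n → ℝ}
    {u v : Fin k → Fin n → ℂ} (hu : ONSys u)
    (h : ∀ i, M *ᵥ v i = (σ (Fin.castLE hk i) : ℂ) • u i) :
    reTrace M u v = topSum k σ := by
  simp [reTrace, h, hu _ _, topSum_eq_sum_castLE hk]

section FrameExpansion

variable {M : Matrix (Fin n) (Fin n) ℂ} {σ : Fin n → ℝ}
  {w z : OrthonormalBasis (Fin n) ℂ (EuclideanSpace ℂ (Fin n))}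

lemma eq_sum_inner_smul (e : OrthonormalBasis (Fin n) ℂ (EuclideanSpace ℂ (Fin n)))
    (y : Fin n → ℂ) : y = ∑ j, ⟪e j, toLp 2 y⟫_ℂ • ⇑(e j) := by
  simpa using congrArg WithLp.ofLp (e.sum_repr' (toLp 2 y)).symm

lemma eq_of_coords_eq (e : OrthonormalBasis (Fin n) ℂ (EuclideanSpace ℂ (Fin n)))
    {u v : Fin k → Fin n → ℂ} (h : ∀ j, coords e u j = coords e v j) : u = v := by
  funext i
  rw [eq_sum_inner_smul e (u i), eq_sum_inner_smul e (v i)]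
  congr! 2 with j
  simpa [coords] using congrArg (· i) (h j)

lemma mulVec_eq_smul_of_inner_eq_zero (hf : ∀ j, M *ᵥ ⇑(w j) = (σ j : ℂ) • ⇑(w j))
    {μ : ℝ} {x : Fin n → ℂ} (hx : ∀ j, σ j ≠ μ → ⟪w j, toLp 2 x⟫_ℂ = 0) :
    M *ᵥ x = (μ : ℂ) • x := by
  conv_lhs => rw [eq_sum_inner_smul w x]
  conv_rhs => rw [eq_sum_inner_smul w x]
  rw [Matrix.mulVec_sum, Finset.smul_sum]
  refine Finset.sum_congr rfl fun j _ => ?_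
  by_cases hj : σ j = μ
  · rw [Matrix.mulVec_smul, hf, hj, smul_comm]
  · simp [hx j hj]

lemma star_dotProduct_mulVec_eq_sum (hf : ∀ j, M *ᵥ ⇑(z j) = (σ j : ℂ) • ⇑(w j))
    (x y : Fin n → ℂ) :
    star x ⬝ᵥ (M *ᵥ y) = ∑ j, σ j * (conj ⟪w j, toLp 2 x⟫_ℂ * ⟪z j, toLp 2 y⟫_ℂ) := by
  conv_lhs => rw [eq_sum_inner_smul z y, Matrix.mulVec_sum, dotProduct_sum]
  refine Finset.sum_congr rfl fun j _ => ?_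
  rw [Matrix.mulVec_smul, hf, dotProduct_smul, dotProduct_smul, star_dotProduct_eq_inner]
  simp only [WithLp.toLp_ofLp, smul_eq_mul]
  rw [inner_conj_symm]
  ring

lemma reTrace_eq_sum (hf : ∀ j, M *ᵥ ⇑(z j) = (σ j : ℂ) • ⇑(w j))
    (u v : Fin k → Fin n → ℂ) :
    reTrace M u v = ∑ j, σ j * (⟪coords w u j, coords z v j⟫_ℂ).re := by
  simp only [reTrace, star_dotProduct_mulVec_eq_sum hf, Complex.re_sum, Complex.re_ofReal_mul]
  rw [Finset.sum_comm]
  refine Finset.sum_congr rfl fun j _ => ?_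
  rw [coords, coords, EuclideanSpace.inner_toLp_toLp]
  simp only [dotProduct, Pi.star_apply, Complex.star_def, Complex.re_sum, Finset.mul_sum,
    mul_comm]

theorem reTrace_le_topSum (hf : ∀ j, M *ᵥ ⇑(z j) = (σ j : ℂ) • ⇑(w j)) (hk : k ≤ n)
    (hσ : ∀ j, 0 ≤ σ j) (hσa : Antitone σ) {u v : Fin k → Fin n → ℂ} (hu : ONSys u) (hv : ONSys v) :
    reTrace M u v ≤ topSum k σ := by
  rw [reTrace_eq_sum hf]
  exact sum_mul_le_topSum hk hσ hσa (fun j => by positivity)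
    (half_add_norm_coords_sq_le_one hu hv w z) (sum_half_add_norm_coords_sq hu hv w z)
    (fun j => re_inner_le_half_add _ _)

theorem isGreatest_reTrace_of_frame (hf : ∀ j, M *ᵥ ⇑(z j) = (σ j : ℂ) • ⇑(w j)) (hk : k ≤ n)
    (hσ : ∀ j, 0 ≤ σ j) (hσa : Antitone σ) :
    IsGreatest ((fun p => reTrace M p.1 p.2) '' onPairs k n) (topSum k σ) := by
  refine ⟨⟨(_, _), ⟨onSys_castLE hk w, onSys_castLE hk z⟩,
    reTrace_eq_topSum hk (onSys_castLE hk w) fun i => hf _⟩, ?_⟩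
  rintro _ ⟨⟨u, v⟩, ⟨hu, hv⟩, rfl⟩
  exact reTrace_le_topSum hf hk hσ hσa hu hv

end FrameExpansion

section SpectralFrames

variable {A : Matrix (Fin n) (Fin n) ℂ}

noncomputable def eigenFrame (hA : A.IsHermitian) :
    OrthonormalBasis (Fin n) ℂ (EuclideanSpace ℂ (Fin n)) :=
  hA.eigenvectorBasis.reindex (Fin.revPerm.trans (Tuple.sort hA.eigenvalues)).symm

lemma mulVec_eigenFrame (hA : A.IsHermitian) (j : Fin n) :
    A *ᵥ ⇑(eigenFrame hA j) = (eigDesc A hA j : ℂ) • ⇑(eigenFrame hA j) := by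
  simp [eigenFrame, hA.mulVec_eigenvectorBasis, eigDesc]

lemma sq_svalues (M : Matrix (Fin n) (Fin n) ℂ) (j : Fin n) :
    svalues M j ^ 2 = eigDesc (Mᴴ * M) (isHermitian_conjTranspose_mul_self M) j :=
  Real.sq_sqrt ((posSemidef_conjTranspose_mul_self M).eigenvalues_nonneg _)

-- `z` diagonalises `Mᴴ M`; `w j := M z j / s j` where `s j ≠ 0`, completed to a basis.
theorem exists_svdFrame (M : Matrix (Fin n) (Fin n) ℂ) :
    ∃ w z : OrthonormalBasis (Fin n) ℂ (EuclideanSpace ℂ (Fin n)),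
      ∀ j, M *ᵥ ⇑(z j) = (svalues M j : ℂ) • ⇑(w j) := by
  set z := eigenFrame (isHermitian_conjTranspose_mul_self M)
  have hdot (i j : Fin n) : star (M *ᵥ ⇑(z i)) ⬝ᵥ (M *ᵥ ⇑(z j)) =
      (svalues M j ^ 2 : ℝ) * if i = j then 1 else 0 := by
    rw [star_mulVec, ← dotProduct_mulVec, mulVec_mulVec, mulVec_eigenFrame, dotProduct_smul,
      ← sq_svalues, star_dotProduct_eq_inner, WithLp.toLp_ofLp, WithLp.toLp_ofLp,
      orthonormal_iff_ite.1 z.orthonormal, smul_eq_mul]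
  set v : Fin n → EuclideanSpace ℂ (Fin n) :=
    fun j => ((svalues M j)⁻¹ : ℂ) • toLp 2 (M *ᵥ ⇑(z j))
  have hv : Orthonormal ℂ ({j | svalues M j ≠ 0}.domRestrict v) := by
    rw [orthonormal_iff_ite]
    rintro ⟨i, hi⟩ ⟨j, hj⟩
    show ⟪v i, v j⟫_ℂ = _
    simp only [v, inner_smul_left, inner_smul_right, ← star_dotProduct_eq_inner, hdot,
      Subtype.mk.injEq]
    split_ifs with hij
    · subst hij
      have : (svalues M i : ℂ) ≠ 0 := by exact_mod_cast hi
      simp [Complex.conj_ofReal]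
      field_simp
    · simp
  obtain ⟨w, hw⟩ := hv.exists_orthonormalBasis_extension_of_card_eq (by simp)
  refine ⟨w, z, fun j => ?_⟩
  by_cases hj : svalues M j = 0
  · have hMz : M *ᵥ ⇑(z j) = 0 := by simpa [hj] using hdot j j
    simp [hj, hMz]
  · rw [hw j hj]
    simp [v, smul_smul, hj]

lemma svalues_antitone (M : Matrix (Fin n) (Fin n) ℂ) : Antitone (svalues M) :=
  fun _ _ hij => Real.sqrt_le_sqrt (Tuple.monotone_sort _ (Fin.rev_le_rev.2 hij))

lemma eigDesc_antitone {A : Matrix (Fin n) (Fin n) ℂ} (hA : A.IsHermitian) :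
    Antitone (eigDesc A hA) :=
  fun _ _ hij => Tuple.monotone_sort _ (Fin.rev_le_rev.2 hij)

theorem isGreatest_reTrace_kyFan (hk : k ≤ n) (M : Matrix (Fin n) (Fin n) ℂ) :
    IsGreatest ((fun p => reTrace M p.1 p.2) '' onPairs k n) (kyFan k M) := by
  obtain ⟨w, z, hf⟩ := exists_svdFrame M
  exact isGreatest_reTrace_of_frame hf hk (fun _ => Real.sqrt_nonneg _) (svalues_antitone M)

theorem kyFan_eq_topSum_eigDesc (hk : k ≤ n) {A : Matrix (Fin n) (Fin n) ℂ}
    (hA : A.PosSemidef) : kyFan k A = topSum k (eigDesc A hA.isHermitian) :=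
  (isGreatest_reTrace_kyFan hk A).unique <| isGreatest_reTrace_of_frame
    (mulVec_eigenFrame hA.isHermitian) hk (fun _ => hA.eigenvalues_nonneg _)
    (eigDesc_antitone hA.isHermitian)

end SpectralFrames

lemma isClosed_setOf_onSys : IsClosed {u : Fin k → Fin n → ℂ | ONSys u} := by
  simp only [ONSys, Set.ofPred_forall]
  exact isClosed_iInter fun i => isClosed_iInter fun j =>
    isClosed_eq (by fun_prop) (by fun_prop)

lemma norm_le_one_of_onSys {u : Fin k → Fin n → ℂ} (hu : ONSys u) : ‖u‖ ≤ 1 := by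
  refine (pi_norm_le_iff_of_nonneg zero_le_one).2 fun i =>
    (pi_norm_le_iff_of_nonneg zero_le_one).2 fun l => ?_
  simpa [(onSys_iff_orthonormal.1 hu).1 i] using PiLp.norm_apply_le (toLp 2 (u i)) l

lemma isCompact_setOf_onSys : IsCompact {u : Fin k → Fin n → ℂ | ONSys u} :=
  Metric.isCompact_of_isClosed_isBounded isClosed_setOf_onSys
    (isBounded_iff_forall_norm_le.2 ⟨1, fun _ => norm_le_one_of_onSys⟩)

lemma isCompact_onPairs : IsCompact (onPairs k n) :=
  isCompact_setOf_onSys.prod isCompact_setOf_onSys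

lemma continuous_reTrace (M : Matrix (Fin n) (Fin n) ℂ) :
    Continuous fun p : (Fin k → Fin n → ℂ) × (Fin k → Fin n → ℂ) => reTrace M p.1 p.2 := by
  unfold reTrace
  fun_prop

lemma reTrace_add_smul (A X : Matrix (Fin n) (Fin n) ℂ) (t : ℝ) (u v : Fin k → Fin n → ℂ) :
    reTrace (A + (t : ℂ) • X) u v = reTrace A u v + t * reTrace X u v := by
  simp [reTrace, Matrix.add_mulVec, Matrix.smul_mulVec, Finset.sum_add_distrib,
    Finset.mul_sum]

section Danskin

open Set

variable {α : Type*} {K : Set α} {f g : α → ℝ} {F : ℝ → ℝ}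

lemma monotoneOn_slope_of_isGreatest_add_mul
    (hF : ∀ t, IsGreatest ((fun x => f x + t * g x) '' K) (F t)) :
    MonotoneOn (fun t => (F t - F 0) / t) (Ioi 0) := by
  intro s (hs : 0 < s) t (ht : 0 < t) hst
  obtain ⟨x, hx, hxs⟩ := (hF s).1
  have hfx : f x ≤ F 0 := by simpa using (hF 0).2 ⟨x, hx, rfl⟩
  have hFt : f x + t * g x ≤ F t := (hF t).2 ⟨x, hx, rfl⟩
  calc (F s - F 0) / s = (f x - F 0) / s + g x := by
        rw [← hxs]; field_simp; ring
    _ ≤ (f x - F 0) / t + g x := by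
        gcongr (?_ + _)
        rw [div_le_div_iff₀ hs ht]
        nlinarith
    _ ≤ (F t - F 0) / t := by
        rw [div_add' _ _ _ ht.ne', div_le_div_iff_of_pos_right ht]
        linarith

variable [TopologicalSpace α]

lemma exists_mem_le_and_le_of_forall_pos (hK : IsCompact K) (hf : Continuous f)
    (hg : Continuous g) {a b c : ℝ} (h : ∀ t > 0, ∃ x ∈ K, a - t * c ≤ f x ∧ b ≤ g x) :
    ∃ x ∈ K, a ≤ f x ∧ b ≤ g x := by
  obtain ⟨x₁, ⟨hx₁K, hx₁b⟩, hmax⟩ :=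
    (hK.inter_right (isClosed_Ici.preimage hg)).exists_isMaxOn
      (by obtain ⟨x, hx, -, hgx⟩ := h 1 one_pos; exact ⟨x, hx, hgx⟩) hf.continuousOn
  have hlim : Tendsto (fun t : ℝ => a - t * c) (𝓝[>] 0) (𝓝 a) :=
    tendsto_nhdsWithin_of_tendsto_nhds
      (by simpa using (tendsto_id (x := 𝓝 (0 : ℝ))).mul_const c |>.const_sub a)
  refine ⟨x₁, hx₁K, le_of_tendsto hlim (eventually_nhdsWithin_of_forall fun t ht => ?_), hx₁b⟩
  obtain ⟨x, hx, hfx, hgx⟩ := h t ht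
  exact hfx.trans (hmax ⟨hx, hgx⟩)

theorem danskin (hK : IsCompact K) (hf : Continuous f) (hg : Continuous g)
    (hF : ∀ t, IsGreatest ((fun x => f x + t * g x) '' K) (F t)) :
    ∃ d, IsGreatest (g '' {x ∈ K | f x = F 0}) d ∧
      Tendsto (fun t => (F t - F 0) / t) (𝓝[>] 0) (𝓝 d) := by
  have hF0 : IsGreatest (f '' K) (F 0) := by simpa using hF 0
  have hle (t : ℝ) {x : α} (hx : x ∈ K) : f x + t * g x ≤ F t := (hF t).2 ⟨x, hx, rfl⟩
  obtain ⟨x₀, ⟨hx₀K, hx₀ : f x₀ = F 0⟩, hmax⟩ :=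
    (hK.inter_right (isClosed_singleton.preimage hf)).exists_isMaxOn
      (by obtain ⟨y, hy, hfy⟩ := hF0.1; exact ⟨y, hy, hfy⟩) hg.continuousOn
  have hd : IsGreatest (g '' {x ∈ K | f x = F 0}) (g x₀) :=
    ⟨⟨x₀, ⟨hx₀K, hx₀⟩, rfl⟩, by rintro _ ⟨y, hy, rfl⟩; exact hmax hy⟩
  set Q := fun t => (F t - F 0) / t
  have hdQ : ∀ t ∈ Ioi (0 : ℝ), g x₀ ≤ Q t := fun t (ht : 0 < t) => by
    rw [le_div_iff₀ ht]; linarith [hle t hx₀K]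
  have hbdd : BddBelow (Q '' Ioi 0) := ⟨g x₀, by rintro _ ⟨t, ht, rfl⟩; exact hdQ t ht⟩
  have hlim := (monotoneOn_slope_of_isGreatest_add_mul hF).tendsto_nhdsGT hbdd
  -- The limit `L` is at least `g x₀`; by compactness some maximiser of `f` has `g ≥ L`.
  suffices hL : sInf (Q '' Ioi 0) ≤ g x₀ by
    rw [le_antisymm hL (le_csInf (nonempty_Ioi.image Q) (by
      rintro _ ⟨t, ht, rfl⟩; exact hdQ t ht))] at hlim
    exact ⟨g x₀, hd, hlim⟩
  obtain ⟨B, hB⟩ := hK.bddAbove_image hg.continuousOn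
  obtain ⟨x₁, hx₁K, hfx₁, hgx₁⟩ := exists_mem_le_and_le_of_forall_pos hK hf hg
    (a := F 0) (c := B - g x₀) (b := sInf (Q '' Ioi 0)) fun t ht => by
      obtain ⟨y, hy, hyt : f y + t * g y = F t⟩ := (hF t).1
      have hfy : f y ≤ F 0 := hF0.2 ⟨y, hy, rfl⟩
      have hgy : g y ≤ B := hB ⟨y, hy, rfl⟩
      refine ⟨y, hy, by nlinarith [hle t hx₀K], (csInf_le hbdd ⟨t, ht, rfl⟩).trans ?_⟩
      rw [div_le_iff₀ ht]
      linarith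
  exact hgx₁.trans (hmax ⟨hx₁K, le_antisymm (hF0.2 ⟨x₁, hx₁K, rfl⟩) hfx₁⟩)

end Danskin

section Subspace

open Set

variable {E : Type*} [NormedAddCommGroup E] [InnerProductSpace ℂ E]
  {S : Submodule ℂ E} [FiniteDimensional ℂ S] {ι : Type*} [Fintype ι]

lemma mem_of_sum_sq_norm_inner_eq (b : OrthonormalBasis ι ℂ S) {x : E}
    (h : ∑ i, ‖⟪(b i : E), x⟫_ℂ‖ ^ 2 = ‖x‖ ^ 2) : x ∈ S := by
  rw [S.mem_iff_norm_starProjection,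
    ← pow_left_inj₀ (norm_nonneg _) (norm_nonneg _) two_ne_zero, ← h]
  change ‖S.orthogonalProjectionOnto x‖ ^ 2 = _
  rw [← b.sum_sq_norm_inner_right]
  simp only [Submodule.inner_orthogonalProjectionOnto_eq_of_mem_left]

lemma sum_inner_apply_eq_trace (T : E →ₗ[ℂ] E) (b : OrthonormalBasis ι ℂ S) :
    ∑ i, ⟪(b i : E), T (b i)⟫_ℂ =
      LinearMap.trace ℂ S (S.orthogonalProjectionOnto.toLinearMap ∘ₗ T ∘ₗ S.subtype) := by
  simp [LinearMap.trace_eq_sum_inner _ b]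

lemma exists_orthonormalBasis_span {k : ℕ} {x : Fin k → E} (hx : Orthonormal ℂ x)
    {s : Set (Fin k)} {v : Fin k → E} (hv : Orthonormal ℂ (s.domRestrict v))
    (hvx : ∀ i ∈ s, v i ∈ Submodule.span ℂ (range x)) :
    ∃ b : OrthonormalBasis (Fin k) ℂ (Submodule.span ℂ (range x)),
      ∀ i ∈ s, (b i : E) = v i := by
  classical
  have := FiniteDimensional.span_of_finite ℂ (finite_range x)
  set v' : Fin k → Submodule.span ℂ (range x) :=
    fun i => if h : i ∈ s then ⟨v i, hvx i h⟩ else 0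
  have hv' : Orthonormal ℂ (s.domRestrict v') := by
    rw [orthonormal_iff_ite] at hv ⊢
    rintro ⟨i, hi⟩ ⟨j, hj⟩
    simpa [v', hi, hj, Submodule.coe_inner] using hv ⟨i, hi⟩ ⟨j, hj⟩
  obtain ⟨b, hb⟩ := hv'.exists_orthonormalBasis_extension_of_card_eq
    (by simp [finrank_span_eq_card hx.linearIndependent])
  exact ⟨b, fun i hi => by simp [hb i hi, v', hi]⟩

lemma exists_orthonormalBasis_span_eq {k : ℕ} {x v : Fin k → E} (hx : Orthonormal ℂ x)
    (hv : Orthonormal ℂ v) (hvx : ∀ i, v i ∈ Submodule.span ℂ (range x)) :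
    ∃ b : OrthonormalBasis (Fin k) ℂ (Submodule.span ℂ (range x)),
      ∀ i, (b i : E) = v i := by
  obtain ⟨b, hb⟩ := exists_orthonormalBasis_span hx (s := univ) (v := v)
    (hv.comp _ Subtype.val_injective) fun i _ => hvx i
  exact ⟨b, fun i => hb i (mem_univ i)⟩

end Subspace

def colSpan (u : Fin k → Fin n → ℂ) : Submodule ℂ (EuclideanSpace ℂ (Fin n)) :=
  Submodule.span ℂ (Set.range fun i => toLp 2 (u i))

instance (u : Fin k → Fin n → ℂ) : FiniteDimensional ℂ (colSpan u) :=
  FiniteDimensional.span_of_finite ℂ (Set.finite_range _)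

lemma toLp_mem_colSpan (u : Fin k → Fin n → ℂ) (i : Fin k) : toLp 2 (u i) ∈ colSpan u :=
  Submodule.subset_span (Set.mem_range_self i)

lemma reTrace_self_eq_re_sum_inner (X : Matrix (Fin n) (Fin n) ℂ) (u : Fin k → Fin n → ℂ) :
    reTrace X u u = (∑ i, ⟪toLp 2 (u i), Matrix.toEuclideanLin X (toLp 2 (u i))⟫_ℂ).re := by
  simp only [reTrace, Complex.re_sum, star_dotProduct_eq_inner]
  rfl

theorem reTrace_self_eq_of_mem_colSpan (X : Matrix (Fin n) (Fin n) ℂ)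
    {u w : Fin k → Fin n → ℂ} (hu : ONSys u) (hw : ONSys w)
    (hwu : ∀ i, toLp 2 (w i) ∈ colSpan u) :
    reTrace X w w = reTrace X u u := by
  have hu' := onSys_iff_orthonormal.1 hu
  obtain ⟨bu, hbu⟩ := exists_orthonormalBasis_span_eq hu' hu' (toLp_mem_colSpan u)
  obtain ⟨bw, hbw⟩ := exists_orthonormalBasis_span_eq hu' (onSys_iff_orthonormal.1 hw) hwu
  rw [reTrace_self_eq_re_sum_inner, reTrace_self_eq_re_sum_inner]
  simp only [← hbu, ← hbw, sum_inner_apply_eq_trace]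

section Span

variable (e : OrthonormalBasis (Fin n) ℂ (EuclideanSpace ℂ (Fin n))) {u : Fin k → Fin n → ℂ}
  {j : Fin n}

lemma mem_colSpan_of_norm_coords_sq_eq_one (hu : ONSys u) (h : ‖coords e u j‖ ^ 2 = 1) :
    e j ∈ colSpan u := by
  have hx := onSys_iff_orthonormal.1 hu
  obtain ⟨b, hb⟩ := exists_orthonormalBasis_span_eq hx hx (toLp_mem_colSpan u)
  refine mem_of_sum_sq_norm_inner_eq b ?_
  simp_rw [hb, norm_inner_symm _ (e j), ← norm_coords_sq, h, e.orthonormal.1 j, one_pow]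

lemma inner_eq_zero_of_coords_eq_zero (h : coords e u j = 0) {y : EuclideanSpace ℂ (Fin n)}
    (hy : y ∈ colSpan u) : ⟪e j, y⟫_ℂ = 0 := by
  refine (Submodule.span_le (p := LinearMap.ker (innerₛₗ ℂ (e j)))).2 ?_ hy
  rintro _ ⟨i, rfl⟩
  simpa [coords] using congrArg (· i) h

end Span

section EqualityCase

variable {A : Matrix (Fin n) (Fin n) ℂ}

lemma coords_of_reTrace_eq_topSum (hk : k ≤ n) (hA : A.PosSemidef) {c : ℝ} (hc0 : 0 < c)
    (hc : ∀ j : Fin n, (j : ℕ) < k → c ≤ eigDesc A hA.isHermitian j)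
    (hc' : ∀ j : Fin n, k ≤ (j : ℕ) → eigDesc A hA.isHermitian j ≤ c)
    {u v : Fin k → Fin n → ℂ} (hu : ONSys u) (hv : ONSys v)
    (heq : reTrace A u v = topSum k (eigDesc A hA.isHermitian)) (j : Fin n) :
    coords (eigenFrame hA.isHermitian) u j = coords (eigenFrame hA.isHermitian) v j ∧
      (c < eigDesc A hA.isHermitian j → ‖coords (eigenFrame hA.isHermitian) u j‖ ^ 2 = 1) ∧
      (eigDesc A hA.isHermitian j < c → coords (eigenFrame hA.isHermitian) u j = 0) := by
  set e := eigenFrame hA.isHermitian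
  have hnn (j : Fin n) : 0 ≤ eigDesc A hA.isHermitian j := hA.eigenvalues_nonneg _
  obtain ⟨hr, h1, h0⟩ := eq_of_sum_mul_eq_topSum hk hnn hc hc' (fun j => by positivity)
    (half_add_norm_coords_sq_le_one hu hv e e) (sum_half_add_norm_coords_sq hu hv e e)
    (fun j => re_inner_le_half_add _ _)
    (by rwa [← reTrace_eq_sum (mulVec_eigenFrame hA.isHermitian)]) j
  have ha := norm_coords_sq_le_one e hu j
  have hb := norm_coords_sq_le_one e hv j
  have hab := norm_sub_sq (𝕜 := ℂ) (coords e u j) (coords e v j)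
  rw [RCLike.re_to_complex] at hab
  have hzero (h : (‖coords e u j‖ ^ 2 + ‖coords e v j‖ ^ 2) / 2 = 0) :
      coords e u j = 0 ∧ coords e v j = 0 := by
    rw [← norm_eq_zero, ← norm_eq_zero (a := coords e v j), ← sq_eq_zero_iff,
      ← sq_eq_zero_iff (a := ‖coords e v j‖)]
    constructor <;> nlinarith [sq_nonneg ‖coords e u j‖, sq_nonneg ‖coords e v j‖]
  refine ⟨?_, fun hj => by linarith [h1 hj], fun hj => (hzero (h0 hj)).1⟩
  rcases (hnn j).lt_or_eq with hpos | hj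
  · rw [← sub_eq_zero, ← norm_eq_zero, ← sq_eq_zero_iff]
    linarith [hr hpos]
  · obtain ⟨hu0, hv0⟩ := hzero (h0 (hj ▸ hc0))
    rw [hu0, hv0]

-- Keep the eigenvectors with eigenvalue above `c = λ_k` and complete them to an orthonormal
-- basis of `colSpan u`; the added vectors are orthogonal to every eigenvector with eigenvalue
-- `≠ c`, hence are eigenvectors for `c`.
theorem exists_eigenSystem_mem_colSpan (hk1 : 1 ≤ k) (hk : k ≤ n) (hA : A.IsHermitian)
    {u : Fin k → Fin n → ℂ} (hu : ONSys u)
    (h1 : ∀ j, eigDesc A hA ⟨k - 1, Nat.sub_one_lt_of_le hk1 hk⟩ < eigDesc A hA j →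
      ‖coords (eigenFrame hA) u j‖ ^ 2 = 1)
    (h0 : ∀ j, eigDesc A hA j < eigDesc A hA ⟨k - 1, Nat.sub_one_lt_of_le hk1 hk⟩ →
      coords (eigenFrame hA) u j = 0) :
    ∃ w : Fin k → Fin n → ℂ, ONSys w ∧
      (∀ i, A *ᵥ w i = (eigDesc A hA (Fin.castLE hk i) : ℂ) • w i) ∧
      ∀ i, toLp 2 (w i) ∈ colSpan u := by
  set e := eigenFrame hA
  set c := eigDesc A hA ⟨k - 1, Nat.sub_one_lt_of_le hk1 hk⟩
  set s := {i : Fin k | c < eigDesc A hA (Fin.castLE hk i)}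
  obtain ⟨b, hb⟩ := exists_orthonormalBasis_span (onSys_iff_orthonormal.1 hu) (s := s)
    (v := fun i => e (Fin.castLE hk i))
    ((e.orthonormal.comp _ (Fin.castLE_injective hk)).comp _ Subtype.val_injective)
    fun i hi => mem_colSpan_of_norm_coords_sq_eq_one e hu (h1 _ hi)
  refine ⟨fun i => ⇑(b i : EuclideanSpace ℂ (Fin n)), onSys_iff_orthonormal.2 ?_,
    fun i => ?_, fun i => (b i).2⟩
  · exact b.orthonormal.comp_linearIsometry (Submodule.subtypeₗᵢ _)
  by_cases hi : i ∈ s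
  · simp only [hb i hi]
    exact mulVec_eigenFrame hA _
  have hci : eigDesc A hA (Fin.castLE hk i) = c :=
    le_antisymm (not_lt.1 hi) (eigDesc_antitone hA (by simp [Fin.le_def]; omega))
  rw [hci]
  refine mulVec_eq_smul_of_inner_eq_zero (mulVec_eigenFrame hA) fun j hj => ?_
  simp only [WithLp.toLp_ofLp]
  rcases hj.lt_or_gt with hj | hj
  · exact inner_eq_zero_of_coords_eq_zero e (h0 j hj) (b i).2
  have hjk : (j : ℕ) < k := by
    by_contra! hjk
    exact hj.not_ge (eigDesc_antitone hA (by simp [Fin.le_def]; omega))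
  have hjs : (⟨j, hjk⟩ : Fin k) ∈ s := hj
  have hji : (⟨j, hjk⟩ : Fin k) ≠ i := fun h => hi (h ▸ hjs)
  have : ⟪b ⟨j, hjk⟩, b i⟫_ℂ = 0 := b.orthonormal.2 hji
  rwa [Submodule.coe_inner, hb _ hjs] at this

theorem exists_eigenSystem_reTrace_eq (hk1 : 1 ≤ k) (hk : k ≤ n) (hA : A.PosSemidef)
    (hpos : 0 < eigDesc A hA.isHermitian ⟨k - 1, Nat.sub_one_lt_of_le hk1 hk⟩)
    (X : Matrix (Fin n) (Fin n) ℂ)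
    {u v : Fin k → Fin n → ℂ} (hu : ONSys u) (hv : ONSys v)
    (heq : reTrace A u v = topSum k (eigDesc A hA.isHermitian)) :
    ∃ w : Fin k → Fin n → ℂ, ONSys w ∧
      (∀ i, A *ᵥ w i = (eigDesc A hA.isHermitian (Fin.castLE hk i) : ℂ) • w i) ∧
      reTrace X w w = reTrace X u v := by
  have hσ := eigDesc_antitone hA.isHermitian
  have H := coords_of_reTrace_eq_topSum hk hA hpos
    (fun j hj => hσ (by simp only [Fin.le_def]; omega))
    (fun j hj => hσ (by simp only [Fin.le_def]; omega)) hu hv heq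
  obtain rfl := eq_of_coords_eq _ fun j => (H j).1
  obtain ⟨w, hw, heig, hspan⟩ := exists_eigenSystem_mem_colSpan hk1 hk hA.isHermitian hu
    (fun j => (H j).2.1) (fun j => (H j).2.2)
  exact ⟨w, hw, heig, reTrace_self_eq_of_mem_colSpan X hu hw hspan⟩

end EqualityCase

end KyFan

open KyFan in
theorem stmt7 {n k : ℕ} (hk1 : 1 ≤ k) (hk : k ≤ n)
    (A : Matrix (Fin n) (Fin n) ℂ) (hA : A.PosSemidef)
    (hpos : 0 < eigDesc A hA.isHermitian ⟨k - 1, by omega⟩) (X : Matrix (Fin n) (Fin n) ℂ) :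
    ∃ d : ℝ,
      IsGreatest {x : ℝ | ∃ u : Fin k → Fin n → ℂ, ONSys u ∧
          (∀ i : Fin k, A *ᵥ u i = (eigDesc A hA.isHermitian (Fin.castLE hk i) : ℂ) • u i) ∧
          x = ∑ i, (star (u i) ⬝ᵥ (X *ᵥ u i)).re} d ∧
      Filter.Tendsto (fun t : ℝ => (kyFan k (A + (t : ℂ) • X) - kyFan k A) / t)
        (nhdsWithin 0 (Set.Ioi 0)) (nhds d) := by
  obtain ⟨d, ⟨⟨⟨u, v⟩, ⟨⟨hu, hv⟩, hmax⟩, rfl⟩, hd⟩, hlim⟩ :=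
    danskin isCompact_onPairs (continuous_reTrace A) (continuous_reTrace X) fun t => by
      simpa only [reTrace_add_smul] using isGreatest_reTrace_kyFan hk (A + (t : ℂ) • X)
  have hF0 : kyFan k (A + ((0 : ℝ) : ℂ) • X) = topSum k (eigDesc A hA.isHermitian) := by
    simp [kyFan_eq_topSum_eigDesc hk hA]
  rw [hF0] at hmax hd
  rw [hF0, ← kyFan_eq_topSum_eigDesc hk hA] at hlim
  obtain ⟨w, hw, heig, hX⟩ := exists_eigenSystem_reTrace_eq hk1 hk hA hpos X hu hv hmax
  refine ⟨_, ⟨⟨w, hw, heig, hX.symm⟩, ?_⟩, hlim⟩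
  rintro _ ⟨w', hw', heig', rfl⟩
  exact hd ⟨(w', w'), ⟨⟨hw', hw'⟩, reTrace_eq_topSum hk hw' heig'⟩, rfl⟩
end

section
/- Let X, Y ∈ M_n(ℂ) with Y positive semidefinite having eigenvalues λ_1(Y) ≥ ... ≥ λ_n(Y) ≥ 0, and let 1 ≤ r ≤ n. Then the set W(X,Y) = {∑_{i=1}^r ⟨u_i, Xu_i⟩ : u_1,...,u_r orthonormal, Yu_i = λ_i(Y)u_i for all 1 ≤ i ≤ r} is a convex subset of ℂ. -/
open Matrix BigOperators
open scoped ComplexOrder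

/-!
Eigenvectors of `Y` for distinct eigenvalues are orthogonal, so two admissible frames `u`, `v`
can be mixed eigenspace by eigenspace. Within one eigenspace, a singular value decomposition of
the orthogonal projection `span u → span v` rotates both frames into frames `x`, `y` with
`⟪x i, y j⟫ = 0` for `i ≠ j`; this does not change `∑ ⟪u i, X u i⟫`, which is the trace of the
compression of `X` to `span u`. Each pair `x i`, `y i` is then merged by the Toeplitz–Hausdorff
argument: after a phase change of `x i`, the quadratic form of `X` is real along the segment from
`x i` to `y i`, so the intermediate value theorem produces a unit vector of `span {x i, y i}` with
the prescribed value. Since these planes are mutually orthogonal, the merged vectors are again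
orthonormal.
-/

open Module Submodule Set ComplexConjugate
open scoped InnerProductSpace

section

variable {𝕜 ι E : Type*} [RCLike 𝕜] [NormedAddCommGroup E] [InnerProductSpace 𝕜 E]

theorem LinearMap.exists_orthonormalBasis_inner_apply_eq_zero_of_ne [Fintype ι] {F G : Type*}
    [NormedAddCommGroup F] [InnerProductSpace 𝕜 F] [FiniteDimensional 𝕜 F]
    [NormedAddCommGroup G] [InnerProductSpace 𝕜 G] [FiniteDimensional 𝕜 G]
    (L : F →ₗ[𝕜] G) (hF : finrank 𝕜 F = Fintype.card ι) (hG : finrank 𝕜 G = Fintype.card ι) :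
    ∃ (b : OrthonormalBasis ι 𝕜 F) (b' : OrthonormalBasis ι 𝕜 G),
      ∀ i j, i ≠ j → ⟪b' i, L (b j)⟫_𝕜 = 0 := by
  classical
  have hsym := L.isPositive_adjoint_comp_self.isSymmetric
  let b := (hsym.eigenvectorBasis hF).reindex (Fintype.equivFin ι).symm
  have hLb : ∀ i j, i ≠ j → ⟪L (b i), L (b j)⟫_𝕜 = 0 := by
    intro i j hij
    have hb : (L.adjoint ∘ₗ L) (b j) = (hsym.eigenvalues hF (Fintype.equivFin ι j) : 𝕜) • b j := by
      simp [b]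
    rw [← LinearMap.adjoint_inner_right, ← LinearMap.comp_apply, hb, inner_smul_right,
      b.orthonormal.2 hij, mul_zero]
  let s : Set ι := {j | L (b j) ≠ 0}
  have hon : Orthonormal 𝕜 (s.domRestrict fun j => (‖L (b j)‖⁻¹ : 𝕜) • L (b j)) :=
    ⟨fun j => norm_smul_inv_norm j.2, fun i j hij => by
      simp [inner_smul_left, inner_smul_right, hLb i j (Subtype.coe_ne_coe.2 hij)]⟩
  obtain ⟨b', hb'⟩ := hon.exists_orthonormalBasis_extension_of_card_eq hG
  refine ⟨b, b', fun i j hij => ?_⟩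
  by_cases hj : L (b j) = 0
  · simp [hj]
  · have : L (b j) = (‖L (b j)‖ : 𝕜) • b' j := by
      rw [hb' j hj, smul_smul, mul_inv_cancel₀ (by simpa using hj), one_smul]
    rw [this, inner_smul_right, b'.orthonormal.2 hij, mul_zero]

theorem LinearMap.trace_eq_sum_inner_of_card_eq_finrank [Fintype ι] [FiniteDimensional 𝕜 E]
    (T : E →ₗ[𝕜] E) {v : ι → E} (hv : Orthonormal 𝕜 v) (hcard : Fintype.card ι = finrank 𝕜 E) :
    T.trace 𝕜 E = ∑ i, ⟪v i, T (v i)⟫_𝕜 := by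
  simpa using T.trace_eq_sum_inner
    (OrthonormalBasis.mk hv (hv.linearIndependent.span_eq_top_of_card_eq_finrank' hcard).ge)

theorem sum_inner_map_eq_of_mem_span [Fintype ι] (T : E →ₗ[𝕜] E) {u x : ι → E}
    (hu : Orthonormal 𝕜 u) (hx : Orthonormal 𝕜 x) (hxu : ∀ i, x i ∈ span 𝕜 (range u)) :
    ∑ i, ⟪x i, T (x i)⟫_𝕜 = ∑ i, ⟪u i, T (u i)⟫_𝕜 := by
  set U := span 𝕜 (range u)
  have := FiniteDimensional.span_of_finite 𝕜 (finite_range u)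
  let K : U →ₗ[𝕜] U := U.orthogonalProjectionOnto.toLinearMap ∘ₗ T ∘ₗ U.subtype
  have hcard : Fintype.card ι = finrank 𝕜 U := (finrank_span_eq_card hu.linearIndependent).symm
  have key : ∀ w : ι → U, Orthonormal 𝕜 w → K.trace 𝕜 U = ∑ i, ⟪(w i : E), T (w i)⟫_𝕜 := by
    intro w hw
    simp [K.trace_eq_sum_inner_of_card_eq_finrank hw hcard, K]
  rw [← key (fun i => ⟨x i, hxu i⟩) (U.subtypeₗᵢ.orthonormal_comp_iff.mp hx),
    key (fun i => ⟨u i, subset_span (mem_range_self i)⟩) (U.subtypeₗᵢ.orthonormal_comp_iff.mp hu)]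

theorem exists_orthonormal_mem_span_inner_eq_zero_of_ne [Fintype ι] {u v : ι → E}
    (hu : Orthonormal 𝕜 u) (hv : Orthonormal 𝕜 v) :
    ∃ x y : ι → E, Orthonormal 𝕜 x ∧ Orthonormal 𝕜 y ∧ (∀ i, x i ∈ span 𝕜 (range u)) ∧
      (∀ i, y i ∈ span 𝕜 (range v)) ∧ ∀ i j, i ≠ j → ⟪x i, y j⟫_𝕜 = 0 := by
  set U := span 𝕜 (range u)
  set V := span 𝕜 (range v)
  have := FiniteDimensional.span_of_finite 𝕜 (finite_range u)
  have := FiniteDimensional.span_of_finite 𝕜 (finite_range v)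
  let L : U →ₗ[𝕜] V := V.orthogonalProjectionOnto.toLinearMap ∘ₗ U.subtype
  obtain ⟨b, b', hbb'⟩ := L.exists_orthonormalBasis_inner_apply_eq_zero_of_ne
    (finrank_span_eq_card hu.linearIndependent) (finrank_span_eq_card hv.linearIndependent)
  refine ⟨fun i => b i, fun i => b' i, b.orthonormal.comp_linearIsometry U.subtypeₗᵢ,
    b'.orthonormal.comp_linearIsometry V.subtypeₗᵢ, fun i => (b i).2, fun i => (b' i).2,
    fun i j hij => ?_⟩
  rw [inner_eq_zero_symm]
  simpa [L] using hbb' j i hij.symm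

theorem OrthogonalFamily.inner_fiberwise_eq_zero {κ : Type*} {V : κ → Submodule 𝕜 E}
    (hV : OrthogonalFamily 𝕜 (fun c => V c) fun c => (V c).subtypeₗᵢ) {lam : ι → κ}
    {f g : (c : κ) → {i // lam i = c} → E} (hf : ∀ c j, f c j ∈ V c) (hg : ∀ c j, g c j ∈ V c)
    (hfg : ∀ c j k, j ≠ k → ⟪f c j, g c k⟫_𝕜 = 0) {i j : ι} (hij : i ≠ j) :
    ⟪f (lam i) ⟨i, rfl⟩, g (lam j) ⟨j, rfl⟩⟫_𝕜 = 0 := by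
  suffices ∀ c (hi : lam i = c) d (hj : lam j = d), ⟪f c ⟨i, hi⟩, g d ⟨j, hj⟩⟫_𝕜 = 0 from
    this _ rfl _ rfl
  intro c hi d hj
  by_cases hcd : c = d
  · subst hcd
    exact hfg c _ _ (by simpa using hij)
  · exact (hV.isOrtho hcd).inner_eq (hf c _) (hg d _)

theorem OrthogonalFamily.exists_orthonormal_mem_inner_eq_zero_of_ne [Fintype ι] {κ : Type*}
    {V : κ → Submodule 𝕜 E} (hV : OrthogonalFamily 𝕜 (fun c => V c) fun c => (V c).subtypeₗᵢ)
    (lam : ι → κ) {u v : ι → E} (hu : Orthonormal 𝕜 u) (hv : Orthonormal 𝕜 v)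
    (huV : ∀ i, u i ∈ V (lam i)) (hvV : ∀ i, v i ∈ V (lam i)) :
    ∃ x y : ι → E, Orthonormal 𝕜 x ∧ Orthonormal 𝕜 y ∧
      (∀ i, x i ∈ V (lam i) ⊓ span 𝕜 (range u)) ∧ (∀ i, y i ∈ V (lam i) ⊓ span 𝕜 (range v)) ∧
      ∀ i j, i ≠ j → ⟪x i, y j⟫_𝕜 = 0 := by
  classical
  have hspan : ∀ {w : ι → E}, (∀ i, w i ∈ V (lam i)) → ∀ c,
      span 𝕜 (range fun j : {i // lam i = c} => w j) ≤ V c ⊓ span 𝕜 (range w) :=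
    fun hw c => le_inf (span_le.2 (range_subset_iff.2 fun ⟨j, hj⟩ => hj ▸ hw j))
      (span_mono (range_comp_subset_range _ _))
  choose xs ys hxs hys hxu hyv hxy using fun c =>
    _root_.exists_orthonormal_mem_span_inner_eq_zero_of_ne
      (hu.comp _ (Subtype.val_injective (p := (lam · = c)))) (hv.comp _ Subtype.val_injective)
  have hxV : ∀ c j, xs c j ∈ V c ⊓ span 𝕜 (range u) := fun c j => hspan huV c (hxu c j)
  have hyV : ∀ c j, ys c j ∈ V c ⊓ span 𝕜 (range v) := fun c j => hspan hvV c (hyv c j)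
  refine ⟨fun i => xs (lam i) ⟨i, rfl⟩, fun i => ys (lam i) ⟨i, rfl⟩,
    ⟨fun i => (hxs _).1 _, fun i j => hV.inner_fiberwise_eq_zero (fun c j => (hxV c j).1)
      (fun c j => (hxV c j).1) fun c _ _ => @(hxs c).2 _ _⟩,
    ⟨fun i => (hys _).1 _, fun i j => hV.inner_fiberwise_eq_zero (fun c j => (hyV c j).1)
      (fun c j => (hyV c j).1) fun c _ _ => @(hys c).2 _ _⟩,
    fun i => hxV _ _, fun i => hyV _ _, fun i j => hV.inner_fiberwise_eq_zero
      (fun c j => (hxV c j).1) (fun c j => (hyV c j).1) hxy⟩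

theorem Orthonormal.of_mem_span_pair {x y w : ι → E} (hx : Orthonormal 𝕜 x)
    (hy : Orthonormal 𝕜 y) (hxy : ∀ i j, i ≠ j → ⟪x i, y j⟫_𝕜 = 0)
    (hw : ∀ i, w i ∈ span 𝕜 {x i, y i}) (hw₁ : ∀ i, ‖w i‖ = 1) : Orthonormal 𝕜 w := by
  refine ⟨hw₁, fun i j hij => (isOrtho_span.2 ?_).inner_eq (hw i) (hw j)⟩
  rintro _ (rfl | rfl) _ (rfl | rfl)
  · exact hx.2 hij
  · exact hxy i j hij
  · exact inner_eq_zero_symm.1 (hxy j i hij.symm)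
  · exact hy.2 hij

end

section

variable {E : Type*} [NormedAddCommGroup E] [InnerProductSpace ℂ E]

theorem Complex.exists_norm_eq_one_im_conj_mul_eq_zero (m : ℂ) :
    ∃ c : ℂ, ‖c‖ = 1 ∧ (conj c * m).im = 0 := by
  by_cases hm : m = 0
  · exact ⟨1, by simp, by simp [hm]⟩
  · refine ⟨m / ‖m‖, by simp [hm], ?_⟩
    rw [map_div₀, Complex.conj_ofReal, div_mul_eq_mul_div, Complex.conj_mul']
    norm_cast

theorem linearIndependent_pair_of_inner_map (T : E →ₗ[ℂ] E) {x y : E} (hx : x ≠ 0)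
    (hTx : ⟪x, T x⟫_ℂ = 0) (hTy : ⟪y, T y⟫_ℂ = 1) : LinearIndependent ℂ ![x, y] := by
  refine LinearIndependent.pair_iff.2 fun α β h => ?_
  have hβ : β = 0 := by
    simpa [inner_smul_left, inner_smul_right, hTx, hTy] using
      congrArg (fun z => ⟪z, T z⟫_ℂ) (eq_neg_of_add_eq_zero_right h)
  subst hβ
  rw [zero_smul, add_zero, smul_eq_zero] at h
  exact ⟨h.resolve_right hx, rfl⟩

theorem exists_mem_span_pair_inner_map_eq_of_zero_of_one (T : E →ₗ[ℂ] E) {x y : E}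
    (hx : ‖x‖ = 1) (hy : ‖y‖ = 1) (hTx : ⟪x, T x⟫_ℂ = 0) (hTy : ⟪y, T y⟫_ℂ = 1) {t : ℝ}
    (ht₀ : 0 ≤ t) (ht₁ : t ≤ 1) : ∃ w ∈ span ℂ {x, y}, ‖w‖ = 1 ∧ ⟪w, T w⟫_ℂ = t := by
  obtain ⟨c, hc, hcρ⟩ :=
    Complex.exists_norm_eq_one_im_conj_mul_eq_zero (⟪x, T y⟫_ℂ - conj ⟪y, T x⟫_ℂ)
  set ρ := conj c * ⟪x, T y⟫_ℂ + c * ⟪y, T x⟫_ℂ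
  -- The phase `c` makes the cross term `ρ` real, hence `⟪w s, T (w s)⟫` real along the path `w`.
  have hρ : (ρ.re : ℂ) = ρ := by
    refine Complex.ext rfl ?_
    rw [Complex.ofReal_im, ← hcρ]
    simp only [ρ, Complex.add_im, Complex.mul_im, Complex.sub_im, Complex.conj_re,
      Complex.conj_im, Complex.sub_re]
    ring
  let w : ℝ → E := fun s => ((1 - s : ℂ) * c) • x + (s : ℂ) • y
  let g : ℝ → ℝ := fun s => s ^ 2 + (1 - s) * s * ρ.re
  have hw : ∀ s, ⟪w s, T (w s)⟫_ℂ = g s := by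
    intro s
    simp only [w, g, map_add, map_smul, inner_add_left, inner_add_right, inner_smul_left,
      inner_smul_right, hTx, hTy, map_mul, map_sub, map_one, Complex.conj_ofReal]
    push_cast
    rw [hρ]
    ring
  have hw₀ : ∀ s, w s ≠ 0 := fun s hs => by
    obtain ⟨hcs, hs₀⟩ := LinearIndependent.pair_iff.1 (linearIndependent_pair_of_inner_map T
      (norm_ne_zero_iff.1 (hx.trans_ne one_ne_zero)) hTx hTy) _ _ hs
    rw [hs₀, sub_zero, one_mul] at hcs
    simp [hcs] at hc
  let F : ℝ → ℝ := fun s => g s / ‖w s‖ ^ 2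
  have hF : Continuous F :=
    Continuous.div (by fun_prop) (by fun_prop) fun s => pow_ne_zero 2 (norm_ne_zero_iff.2 (hw₀ s))
  have hF₀ : F 0 = 0 := by simp [F, g]
  have hF₁ : F 1 = 1 := by simp [F, g, w, hy]
  obtain ⟨s, -, hs⟩ := intermediate_value_Icc zero_le_one hF.continuousOn
    (show t ∈ Icc (F 0) (F 1) by rw [hF₀, hF₁]; exact ⟨ht₀, ht₁⟩)
  have hmem : w s ∈ span ℂ {x, y} :=
    add_mem (smul_mem _ _ (subset_span (by simp))) (smul_mem _ _ (subset_span (by simp)))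
  refine ⟨(‖w s‖⁻¹ : ℂ) • w s, smul_mem _ _ hmem, norm_smul_inv_norm (hw₀ s), ?_⟩
  rw [map_smul, inner_smul_left, inner_smul_right, hw, ← hs]
  simp only [F, map_inv₀, Complex.conj_ofReal]
  push_cast
  ring

theorem exists_mem_span_pair_inner_map_eq (T : E →ₗ[ℂ] E) {x y : E} (hx : ‖x‖ = 1)
    (hy : ‖y‖ = 1) {a b : ℝ} (ha : 0 ≤ a) (hb : 0 ≤ b) (hab : a + b = 1) :
    ∃ w ∈ span ℂ {x, y}, ‖w‖ = 1 ∧ ⟪w, T w⟫_ℂ = a • ⟪x, T x⟫_ℂ + b • ⟪y, T y⟫_ℂ := by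
  set A := ⟪x, T x⟫_ℂ
  set B := ⟪y, T y⟫_ℂ
  by_cases hAB : A = B
  · exact ⟨x, subset_span (by simp), hx, by rw [← hAB, ← add_smul, hab, one_smul]⟩
  have hBA : B - A ≠ 0 := sub_ne_zero.2 (Ne.symm hAB)
  let S : E →ₗ[ℂ] E := (B - A)⁻¹ • (T - A • LinearMap.id)
  have hS : ∀ w, ‖w‖ = 1 → ⟪w, S w⟫_ℂ = (B - A)⁻¹ * (⟪w, T w⟫_ℂ - A) := by
    intro w hw
    simp [S, inner_self_eq_norm_sq_to_K, hw]
  obtain ⟨w, hw, hw₁, hwS⟩ := exists_mem_span_pair_inner_map_eq_of_zero_of_one S hx hy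
    (by rw [hS x hx, sub_self, mul_zero]) (by rw [hS y hy, inv_mul_cancel₀ hBA]) hb
    (by linarith)
  refine ⟨w, hw, hw₁, ?_⟩
  rw [hS w hw₁, inv_mul_eq_iff_eq_mul₀ hBA] at hwS
  have hab' : (a : ℂ) + b = 1 := by exact_mod_cast hab
  rw [Complex.real_smul, Complex.real_smul]
  linear_combination hwS - A * hab'

theorem convex_setOf_sum_inner_map {ι κ : Type*} [Fintype ι] (T : E →ₗ[ℂ] E)
    {V : κ → Submodule ℂ E} (hV : OrthogonalFamily ℂ (fun c => V c) fun c => (V c).subtypeₗᵢ)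
    (lam : ι → κ) :
    Convex ℝ {z : ℂ | ∃ u : ι → E, Orthonormal ℂ u ∧ (∀ i, u i ∈ V (lam i)) ∧
      z = ∑ i, ⟪u i, T (u i)⟫_ℂ} := by
  rintro _ ⟨u, hu, huV, rfl⟩ _ ⟨v, hv, hvV, rfl⟩ a b ha hb hab
  obtain ⟨x, y, hx, hy, hxV, hyV, hxy⟩ :=
    hV.exists_orthonormal_mem_inner_eq_zero_of_ne lam hu hv huV hvV
  choose w hw hw₁ hwT using fun i =>
    exists_mem_span_pair_inner_map_eq T (hx.1 i) (hy.1 i) ha hb hab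
  refine ⟨w, hx.of_mem_span_pair hy hxy hw hw₁,
    fun i => span_le.2 (by simp [insert_subset_iff, (hxV i).1, (hyV i).1]) (hw i), ?_⟩
  rw [← sum_inner_map_eq_of_mem_span T hu hx fun i => (hxV i).2,
    ← sum_inner_map_eq_of_mem_span T hv hy fun i => (hyV i).2]
  simp [hwT, Finset.sum_add_distrib, Finset.smul_sum]

end

theorem onSys_iff_orthonormal {n k : ℕ} {u : Fin k → Fin n → ℂ} :
    ONSys u ↔ Orthonormal ℂ fun i => WithLp.toLp 2 (u i) := by
  rw [orthonormal_iff_ite]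
  simp only [ONSys, EuclideanSpace.inner_toLp_toLp, dotProduct_comm]

namespace Matrix

variable {𝕜 m : Type*} [RCLike 𝕜] [Fintype m] [DecidableEq m]

theorem mulVec_eq_smul_iff_mem_eigenspace (A : Matrix m m 𝕜) (μ : 𝕜) (v : m → 𝕜) :
    A *ᵥ v = μ • v ↔ WithLp.toLp 2 v ∈ Module.End.eigenspace (toEuclideanLin A) μ := by
  rw [Module.End.mem_eigenspace_iff, ← WithLp.toLp_smul]
  exact (WithLp.toLp_injective 2).eq_iff.symm

theorem star_dotProduct_mulVec_eq_inner (A : Matrix m m 𝕜) (v : m → 𝕜) :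
    star v ⬝ᵥ (A *ᵥ v) = ⟪WithLp.toLp 2 v, toEuclideanLin A (WithLp.toLp 2 v)⟫_𝕜 :=
  dotProduct_comm _ _

end Matrix

theorem stmt12_general {n r : ℕ} (hr : r ≤ n)
    (X Y : Matrix (Fin n) (Fin n) ℂ) (hY : Y.PosSemidef) :
    Convex ℝ {z : ℂ | ∃ u : Fin r → Fin n → ℂ, ONSys u ∧
        (∀ i : Fin r, Y *ᵥ u i = (eigDesc Y hY.isHermitian (Fin.castLE hr i) : ℂ) • u i) ∧
        z = ∑ i, star (u i) ⬝ᵥ (X *ᵥ u i)} := by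
  convert convex_setOf_sum_inner_map (toEuclideanLin X)
    (isSymmetric_toEuclideanLin_iff.2 hY.isHermitian).orthogonalFamily_eigenspaces
    (fun i : Fin r => (eigDesc Y hY.isHermitian (Fin.castLE hr i) : ℂ)) using 1
  ext z
  simp only [mem_ofPred_eq, onSys_iff_orthonormal, mulVec_eq_smul_iff_mem_eigenspace,
    star_dotProduct_mulVec_eq_inner]
  exact ⟨fun ⟨u, hu⟩ => ⟨_, hu⟩, fun ⟨u, hu⟩ => ⟨fun i => WithLp.ofLp (u i), hu⟩⟩

theorem stmt12 {n r : ℕ} (hr1 : 1 ≤ r) (hr : r ≤ n)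
    (X Y : Matrix (Fin n) (Fin n) ℂ) (hY : Y.PosSemidef) :
    Convex ℝ {z : ℂ | ∃ u : Fin r → Fin n → ℂ, ONSys u ∧
        (∀ i : Fin r, Y *ᵥ u i = (eigDesc Y hY.isHermitian (Fin.castLE hr i) : ℂ) • u i) ∧
        z = ∑ i, star (u i) ⬝ᵥ (X *ᵥ u i)} :=
  stmt12_general hr X Y hY
end

section
/- For any B ∈ M_n(ℂ) and any 1 ≤ m ≤ n, the m-numerical range {∑_{i=1}^m ⟨u_i, Bu_i⟩ : u_1,...,u_m orthonormal in ℂ^n} is a convex subset of ℂ. -/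
/-!
Let `u` and `v` be orthonormal `m`-frames. Replacing them by `u U` and `v V` for unitary `U`, `V`
changes neither orthonormality nor the sums `∑ ⟪u i, B u i⟫`, and choosing `U`, `V` from a
singular value decomposition of the cross Gram matrix `(⟪u i, v j⟫)` makes `u i ⟂ v j` for
`i ≠ j`. The planes `span {u i, v i}` are then mutually orthogonal, and in each one the
Toeplitz–Hausdorff argument yields a unit vector `w i` with
`⟪w i, B w i⟫ = t ⟪u i, B u i⟫ + (1 - t) ⟪v i, B v i⟫`; the frame `w` realizes the convex
combination.
-/

open Matrix BigOperators
open scoped ComplexOrder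

open Set Submodule
open scoped InnerProductSpace ComplexConjugate

section TwoDimensional
variable {E : Type*} [NormedAddCommGroup E] [InnerProductSpace ℂ E]

theorem exists_unit_mem_span_pair_inner_map_self_eq_of_im_eq_zero (S : E →ₗ[ℂ] E) {u v : E}
    (hu : ‖u‖ = 1) (hv : ‖v‖ = 1) (hSu : ⟪u, S u⟫_ℂ = 1) (hSv : ⟪v, S v⟫_ℂ = 0)
    (him : (⟪u, S v⟫_ℂ + ⟪v, S u⟫_ℂ).im = 0) {t : ℝ} (ht : t ∈ Icc 0 1) :
    ∃ w ∈ span ℂ {u, v}, ‖w‖ = 1 ∧ ⟪w, S w⟫_ℂ = t := by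
  set R := (⟪u, S v⟫_ℂ + ⟪v, S u⟫_ℂ).re
  have hR : ⟪u, S v⟫_ℂ + ⟪v, S u⟫_ℂ = R := Complex.ext rfl (by simpa using him)
  let w : ℝ → E := fun s => (s : ℂ) • u + ((1 - s : ℝ) : ℂ) • v
  have hSw : ∀ s, ⟪w s, S (w s)⟫_ℂ = ((s ^ 2 + s * (1 - s) * R : ℝ) : ℂ) := by
    intro s
    simp only [w, map_add, map_smul, inner_add_left, inner_add_right, inner_smul_left,
      inner_smul_right, hSu, hSv, Complex.conj_ofReal]
    push_cast
    linear_combination (s * (1 - s) : ℂ) * hR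
  -- if `w s = 0` then `s • u = -(1 - s) • v`, whose forms are `s ^ 2` and `0`
  have hw : ∀ s, w s ≠ 0 := by
    intro s hs
    have hsu : (s : ℂ) • u = -(((1 - s : ℝ) : ℂ) • v) := eq_neg_of_add_eq_zero_left hs
    have hs2 : (s : ℂ) ^ 2 = 0 := by
      simpa [inner_smul_left, inner_smul_right, hSu, hSv, ← sq] using
        congrArg (fun x => ⟪x, S x⟫_ℂ) hsu
    have hs0 : s = 0 := by exact_mod_cast pow_eq_zero_iff two_ne_zero |>.mp hs2
    have : w s = v := by simp [w, hs0]
    simp [← this, hs] at hv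
  have hcont : ContinuousOn (fun s => (s ^ 2 + s * (1 - s) * R) / ‖w s‖ ^ 2) (Icc 0 1) := by
    refine ContinuousOn.div (by fun_prop) (by fun_prop) fun s _ => by simpa using hw s
  obtain ⟨s, -, hs⟩ := intermediate_value_Icc zero_le_one hcont (by simpa [w, hu] using ht)
  refine ⟨((‖w s‖⁻¹ : ℝ) : ℂ) • w s, ?_, ?_, ?_⟩
  · exact smul_mem _ _ (mem_span_pair.mpr ⟨_, _, rfl⟩)
  · simpa using norm_smul_inv_norm (𝕜 := ℂ) (hw s)
  · simp only [map_smul, inner_smul_left, inner_smul_right, hSw, Complex.conj_ofReal, ← hs]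
    have : ‖w s‖ ≠ 0 := norm_ne_zero_iff.mpr (hw s)
    push_cast
    field_simp

theorem Complex.exists_norm_eq_one_im_mul_eq_zero (d : ℂ) :
    ∃ ζ : ℂ, ‖ζ‖ = 1 ∧ (ζ * d).im = 0 := by
  by_cases hd : d = 0
  · exact ⟨1, by simp, by simp [hd]⟩
  refine ⟨conj d / ‖d‖, by simp [hd], ?_⟩
  rw [div_mul_eq_mul_div, Complex.conj_mul']
  norm_cast

theorem exists_unit_mem_span_pair_inner_map_self_eq_of_eq_one_of_eq_zero (S : E →ₗ[ℂ] E)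
    {u v : E} (hu : ‖u‖ = 1) (hv : ‖v‖ = 1) (hSu : ⟪u, S u⟫_ℂ = 1) (hSv : ⟪v, S v⟫_ℂ = 0)
    {t : ℝ} (ht : t ∈ Icc 0 1) :
    ∃ w ∈ span ℂ {u, v}, ‖w‖ = 1 ∧ ⟪w, S w⟫_ℂ = t := by
  -- rotating `v` by a phase `ζ` makes the cross term real
  obtain ⟨ζ, hζ, him⟩ :=
    Complex.exists_norm_eq_one_im_mul_eq_zero (⟪u, S v⟫_ℂ - ⟪S u, v⟫_ℂ)
  have hcross : ⟪u, S (ζ • v)⟫_ℂ + ⟪ζ • v, S u⟫_ℂ = ζ * ⟪u, S v⟫_ℂ + conj (ζ * ⟪S u, v⟫_ℂ) := by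
    simp [mul_comm]
  have him' : (⟪u, S (ζ • v)⟫_ℂ + ⟪ζ • v, S u⟫_ℂ).im = 0 := by
    rwa [hcross, Complex.add_im, Complex.conj_im, ← sub_eq_add_neg, ← Complex.sub_im, ← mul_sub]
  obtain ⟨w, hw, hw1, hSw⟩ := exists_unit_mem_span_pair_inner_map_self_eq_of_im_eq_zero S hu
    (by simp [norm_smul, hζ, hv]) hSu (by simp [hSv]) him' ht
  have hspan : span ℂ {u, ζ • v} ≤ span ℂ {u, v} :=
    span_le.mpr (insert_subset_iff.mpr ⟨subset_span (by simp),
      singleton_subset_iff.mpr (smul_mem _ _ (subset_span (by simp)))⟩)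
  exact ⟨w, hspan hw, hw1, hSw⟩

theorem exists_unit_mem_span_pair_inner_map_self_eq (T : E →ₗ[ℂ] E) {u v : E}
    (hu : ‖u‖ = 1) (hv : ‖v‖ = 1) {t : ℝ} (ht : t ∈ Icc 0 1) :
    ∃ w ∈ span ℂ {u, v}, ‖w‖ = 1 ∧ ⟪w, T w⟫_ℂ = t * ⟪u, T u⟫_ℂ + (1 - t) * ⟪v, T v⟫_ℂ := by
  set a := ⟪u, T u⟫_ℂ
  set b := ⟪v, T v⟫_ℂ
  by_cases hab : a = b
  · exact ⟨u, subset_span (by simp), hu, by rw [← hab]; ring⟩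
  have hab' : a - b ≠ 0 := sub_ne_zero.mpr hab
  set S : E →ₗ[ℂ] E := (a - b)⁻¹ • (T - b • LinearMap.id)
  have hS : ∀ x, ‖x‖ = 1 → ⟪x, S x⟫_ℂ = (a - b)⁻¹ * (⟪x, T x⟫_ℂ - b) := by
    intro x hx
    simp [S, inner_self_eq_norm_sq_to_K, hx]
  obtain ⟨w, hw, hw1, hSw⟩ :=
    exists_unit_mem_span_pair_inner_map_self_eq_of_eq_one_of_eq_zero S hu hv
      (by rw [hS u hu]; exact inv_mul_cancel₀ hab') (by rw [hS v hv]; simp [b]) ht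
  refine ⟨w, hw, hw1, ?_⟩
  rw [hS w hw1] at hSw
  field_simp at hSw
  linear_combination hSw

end TwoDimensional

section Mixing
variable {E : Type*} [NormedAddCommGroup E] [InnerProductSpace ℂ E] {ι : Type*}

noncomputable def mixFamily [Fintype ι] (U : Matrix ι ι ℂ) (u : ι → E) (j : ι) : E :=
  ∑ i, U i j • u i

noncomputable def crossGram (u v : ι → E) : Matrix ι ι ℂ := of fun i j => ⟪u i, v j⟫_ℂ

theorem crossGram_mixFamily [Fintype ι] (U V : Matrix ι ι ℂ) (u v : ι → E) :
    crossGram (mixFamily U u) (mixFamily V v) = Uᴴ * crossGram u v * V := by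
  ext j k
  simp only [crossGram, mixFamily, of_apply, sum_inner, inner_sum, inner_smul_left,
    inner_smul_right, mul_apply, conjTranspose_apply, Finset.sum_mul, Finset.mul_sum,
    RCLike.star_def]
  exact Finset.sum_congr rfl fun i _ => Finset.sum_congr rfl fun i' _ => by ring

theorem map_mixFamily [Fintype ι] (T : E →ₗ[ℂ] E) (U : Matrix ι ι ℂ) (u : ι → E) :
    T ∘ mixFamily U u = mixFamily U (T ∘ u) := by
  funext j
  simp [mixFamily]

theorem crossGram_self (u : ι → E) : crossGram u u = gram ℂ u := rfl

theorem Orthonormal.mixFamily [Fintype ι] [DecidableEq ι] {U : Matrix ι ι ℂ}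
    (hU : U ∈ unitaryGroup ι ℂ) {u : ι → E} (hu : Orthonormal ℂ u) :
    Orthonormal ℂ (mixFamily U u) := by
  rw [← gram_eq_one_iff_orthonormal, ← crossGram_self] at hu ⊢
  rw [crossGram_mixFamily, hu, Matrix.mul_one, ← star_eq_conjTranspose,
    mem_unitaryGroup_iff'.mp hU]

theorem sum_inner_map_mixFamily_self [Fintype ι] [DecidableEq ι] (T : E →ₗ[ℂ] E)
    {U : Matrix ι ι ℂ} (hU : U ∈ unitaryGroup ι ℂ) (u : ι → E) :
    ∑ j, ⟪mixFamily U u j, T (mixFamily U u j)⟫_ℂ = ∑ i, ⟪u i, T (u i)⟫_ℂ := by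
  have htrace : ∀ w : ι → E, ∑ i, ⟪w i, T (w i)⟫_ℂ = trace (crossGram w (T ∘ w)) :=
    fun w => rfl
  rw [htrace, htrace, map_mixFamily, crossGram_mixFamily, trace_mul_cycle,
    ← star_eq_conjTranspose, mem_unitaryGroup_iff.mp hU, Matrix.one_mul]

end Mixing

section SVD
variable {𝕜 : Type*} [RCLike 𝕜] {ι : Type*} [Fintype ι]

theorem exists_orthonormalBasis_inner_eq_zero_of_pairwise {F : Type*} [NormedAddCommGroup F]
    [InnerProductSpace 𝕜 F] [FiniteDimensional 𝕜 F] (hcard : Module.finrank 𝕜 F = Fintype.card ι)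
    {y : ι → F} (hy : Pairwise fun j k => ⟪y j, y k⟫_𝕜 = 0) :
    ∃ b : OrthonormalBasis ι 𝕜 F, Pairwise fun j k => ⟪b j, y k⟫_𝕜 = 0 := by
  set s : Set ι := {k | y k ≠ 0}
  set v : ι → F := fun k => (‖y k‖ : 𝕜)⁻¹ • y k
  have hv : Orthonormal 𝕜 (s.domRestrict v) := by
    refine ⟨fun k => norm_smul_inv_norm k.2, fun j k hjk => ?_⟩
    simp [v, inner_smul_left, inner_smul_right, hy (Subtype.coe_ne_coe.mpr hjk)]
  obtain ⟨b, hb⟩ := hv.exists_orthonormalBasis_extension_of_card_eq hcard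
  refine ⟨b, fun j k hjk => show ⟪b j, y k⟫_𝕜 = 0 from ?_⟩
  by_cases hk : y k = 0
  · simp [hk]
  have hyk : y k = (‖y k‖ : 𝕜) • b k := by
    rw [hb k hk, smul_smul, mul_inv_cancel₀ (by simpa using hk), one_smul]
  rw [hyk, inner_smul_right, b.orthonormal.2 hjk, mul_zero]

theorem exists_mem_unitaryGroup_isDiag_star_mul [DecidableEq ι] (Y : Matrix ι ι 𝕜)
    (hY : (Yᴴ * Y).IsDiag) : ∃ W ∈ unitaryGroup ι 𝕜, (star W * Y).IsDiag := by
  set y : ι → EuclideanSpace 𝕜 ι := fun k => WithLp.toLp 2 (Yᵀ k)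
  have hy : ∀ j k, ⟪y j, y k⟫_𝕜 = (Yᴴ * Y) j k := by
    intro j k
    simp [y, EuclideanSpace.inner_eq_star_dotProduct, dotProduct, mul_apply, mul_comm]
  obtain ⟨b, hb⟩ := exists_orthonormalBasis_inner_eq_zero_of_pairwise (by simp)
    fun j k hjk => (hy j k).trans (hY hjk)
  refine ⟨(EuclideanSpace.basisFun ι 𝕜).toBasis.toMatrix b,
    (EuclideanSpace.basisFun ι 𝕜).toMatrix_orthonormalBasis_mem_unitary b, fun j k hjk => ?_⟩
  rw [← hb hjk]
  simp [y, EuclideanSpace.inner_eq_star_dotProduct, dotProduct, mul_apply, mul_comm,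
    Module.Basis.toMatrix_apply]

theorem exists_mem_unitaryGroup_isDiag_star_mul_mul [DecidableEq ι] (C : Matrix ι ι 𝕜) :
    ∃ U ∈ unitaryGroup ι 𝕜, ∃ V ∈ unitaryGroup ι 𝕜, (star U * C * V).IsDiag := by
  set hC := isHermitian_conjTranspose_mul_self C
  have hV := hC.conjStarAlgAut_star_eigenvectorUnitary
  rw [Unitary.conjStarAlgAut_apply, Unitary.coe_star, star_star] at hV
  set V : Matrix ι ι 𝕜 := ↑hC.eigenvectorUnitary
  have hdiag : ((C * V)ᴴ * (C * V)).IsDiag := by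
    rw [conjTranspose_mul, ← star_eq_conjTranspose V, ← Matrix.mul_assoc,
      Matrix.mul_assoc (star V) Cᴴ, hV]
    exact isDiag_diagonal _
  obtain ⟨U, hU, hUCV⟩ := exists_mem_unitaryGroup_isDiag_star_mul _ hdiag
  exact ⟨U, hU, V, Subtype.prop _, by rwa [Matrix.mul_assoc]⟩

end SVD

section KNumericalRange
variable {E : Type*} [NormedAddCommGroup E] [InnerProductSpace ℂ E]

/-- Halmos' `k`-numerical range of `T`, for `k = card ι`. -/
def kNumericalRange (ι : Type*) [Fintype ι] (T : E →ₗ[ℂ] E) : Set ℂ :=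
  {z | ∃ u : ι → E, Orthonormal ℂ u ∧ z = ∑ i, ⟪u i, T (u i)⟫_ℂ}

theorem exists_mixFamily_pairwise_inner_eq_zero {ι : Type*} [Fintype ι] [DecidableEq ι]
    (u v : ι → E) : ∃ U ∈ unitaryGroup ι ℂ, ∃ V ∈ unitaryGroup ι ℂ,
      Pairwise fun j k => ⟪mixFamily U u j, mixFamily V v k⟫_ℂ = 0 := by
  obtain ⟨U, hU, V, hV, hdiag⟩ := exists_mem_unitaryGroup_isDiag_star_mul_mul (crossGram u v)
  refine ⟨U, hU, V, hV, fun j k hjk => ?_⟩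
  rw [star_eq_conjTranspose, ← crossGram_mixFamily] at hdiag
  exact hdiag hjk

theorem convex_kNumericalRange (ι : Type*) [Fintype ι] (T : E →ₗ[ℂ] E) :
    Convex ℝ (kNumericalRange ι T) := by
  classical
  rintro _ ⟨u, hu, rfl⟩ _ ⟨v, hv, rfl⟩ p q hp hq hpq
  obtain ⟨U, hU, V, hV, huv⟩ := exists_mixFamily_pairwise_inner_eq_zero u v
  set u' := mixFamily U u
  set v' := mixFamily V v
  have hu' : Orthonormal ℂ u' := hu.mixFamily hU
  have hv' : Orthonormal ℂ v' := hv.mixFamily hV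
  choose w hw_mem hw_norm hw_inner using fun i =>
    exists_unit_mem_span_pair_inner_map_self_eq T (hu'.1 i) (hv'.1 i) ⟨hp, by linarith⟩
  refine ⟨w, ⟨hw_norm, fun i j hij => ?_⟩, ?_⟩
  · have hortho : span ℂ {u' i, v' i} ⟂ span ℂ {u' j, v' j} := by
      simp only [isOrtho_span, Set.mem_insert_iff, Set.mem_singleton_iff]
      rintro _ (rfl | rfl) _ (rfl | rfl)
      · exact hu'.2 hij
      · exact huv hij
      · rw [← inner_conj_symm, huv hij.symm, map_zero]
      · exact hv'.2 hij
    exact hortho.inner_eq (hw_mem i) (hw_mem j)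
  · rw [← sum_inner_map_mixFamily_self T hU u, ← sum_inner_map_mixFamily_self T hV v]
    simp only [hw_inner, Complex.real_smul, Finset.mul_sum, ← Finset.sum_add_distrib,
      show q = 1 - p by linarith]
    push_cast
    rfl

end KNumericalRange

theorem setOf_ONSys_eq_kNumericalRange {n m : ℕ} (B : Matrix (Fin n) (Fin n) ℂ) :
    {z : ℂ | ∃ u : Fin m → Fin n → ℂ, ONSys u ∧ z = ∑ i, star (u i) ⬝ᵥ (B *ᵥ u i)} =
      kNumericalRange (Fin m) (toEuclideanLin B) := by
  have hinner : ∀ x y : Fin n → ℂ, ⟪WithLp.toLp 2 x, WithLp.toLp 2 y⟫_ℂ = star x ⬝ᵥ y := by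
    intro x y
    rw [EuclideanSpace.inner_eq_star_dotProduct, dotProduct_comm]
  have hON : ∀ u : Fin m → Fin n → ℂ, ONSys u ↔ Orthonormal ℂ fun i => WithLp.toLp 2 (u i) := by
    intro u
    simp only [orthonormal_iff_ite, hinner, ONSys]
  ext z
  constructor
  · rintro ⟨u, hu, rfl⟩
    exact ⟨fun i => WithLp.toLp 2 (u i), (hON u).mp hu, by simp [hinner]⟩
  · rintro ⟨u, hu, rfl⟩
    exact ⟨fun i => (u i).ofLp, (hON _).mpr hu, by simp [← hinner, toLpLin_apply]⟩

theorem stmt13_general {n m : ℕ} (B : Matrix (Fin n) (Fin n) ℂ) :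
    Convex ℝ {z : ℂ | ∃ u : Fin m → Fin n → ℂ, ONSys u ∧
        z = ∑ i, star (u i) ⬝ᵥ (B *ᵥ u i)} := by
  rw [setOf_ONSys_eq_kNumericalRange]
  exact convex_kNumericalRange _ _

theorem stmt13 {n m : ℕ} (hm1 : 1 ≤ m) (hm : m ≤ n) (B : Matrix (Fin n) (Fin n) ℂ) :
    Convex ℝ {z : ℂ | ∃ u : Fin m → Fin n → ℂ, ONSys u ∧
        z = ∑ i, star (u i) ⬝ᵥ (B *ᵥ u i)} :=
  stmt13_general B
end
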